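/- arXiv:math/0604430 — 10 statements merged into one kernel-verified Lean document; each statement's English description precedes it below -/
import Mathlib

section
/- If F is a filling of an augmented composition diagram with no descents such that every type A and type B triple is an inversion triple, then any two cells in the same row of F have distinct entries. -/
/-- Indicator `I(x,y) = 1` if `x > y`, else `0`. -/
def ind (x y : ℕ) : ℤ := if y < x then 1 else 0

/-- A semi-skyline augmented filling (SSAF) of a weak composition.
Columns are indexed by positive integers (column 0 is unused and empty);
`shape i` is the number of non-basement cells of column `i`; `entry i j`
is the entry in column `i`, row `j`, with row `0` the basement (entry `i`),
and `entry i j = 0` for cells outside the augmented diagram. -/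
structure SSAF where
  shape : ℕ → ℕ
  entry : ℕ → ℕ → ℕ
  shape_zero : shape 0 = 0
  support : ∃ N, ∀ i, N ≤ i → shape i = 0
  basement : ∀ i, entry i 0 = i
  pos : ∀ i j, 1 ≤ j → j ≤ shape i → 1 ≤ entry i j
  zero_outside : ∀ i j, shape i < j → entry i j = 0
  noDescent : ∀ i j, j + 1 ≤ shape i → entry i (j + 1) ≤ entry i j
  typeA : ∀ i1 i2 j, i1 < i2 → shape i2 ≤ shape i1 → 1 ≤ j → j ≤ shape i2 →
    ind (entry i1 j) (entry i2 j) + ind (entry i2 j) (entry i1 (j - 1))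
      - ind (entry i1 j) (entry i1 (j - 1)) = 1
  typeB : ∀ i1 i2 j, i1 < i2 → shape i1 < shape i2 → j ≤ shape i1 → j + 1 ≤ shape i2 →
    ind (entry i2 (j + 1)) (entry i1 j) + ind (entry i1 j) (entry i2 j)
      - ind (entry i2 (j + 1)) (entry i2 j) = 1

private lemma aux_distinct (F : SSAF) (i1 i2 j : ℕ)
    (hlt : i1 < i2) (hj : 1 ≤ j) (h1 : j ≤ F.shape i1) (h2 : j ≤ F.shape i2) :
    F.entry i1 j ≠ F.entry i2 j := by
  intro heq
  rcases le_or_gt (F.shape i2) (F.shape i1) with hs | hs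
  · have hA := F.typeA i1 i2 j hlt hs hj h2
    have hd : F.entry i1 (j - 1 + 1) ≤ F.entry i1 (j - 1) := by
      apply F.noDescent
      omega
    rw [Nat.sub_add_cancel hj] at hd
    have e1 : ind (F.entry i1 j) (F.entry i2 j) = 0 := by
      simp [ind, heq]
    have e2 : ind (F.entry i2 j) (F.entry i1 (j - 1)) = 0 := by
      simp [ind]; omega
    have e3 : ind (F.entry i1 j) (F.entry i1 (j - 1)) = 0 := by
      simp [ind]; omega
    rw [e1, e2, e3] at hA
    norm_num at hA
  · have hB := F.typeB i1 i2 j hlt hs h1 (by omega)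
    have hd : F.entry i2 (j + 1) ≤ F.entry i2 j := F.noDescent i2 j (by omega)
    have e1 : ind (F.entry i2 (j + 1)) (F.entry i1 j) = 0 := by
      simp [ind]; omega
    have e2 : ind (F.entry i1 j) (F.entry i2 j) = 0 := by
      simp [ind, heq]
    have e3 : ind (F.entry i2 (j + 1)) (F.entry i2 j) = 0 := by
      simp [ind]; omega
    rw [e1, e2, e3] at hB
    norm_num at hB

/-- In a descent-free augmented filling all of whose type A and type B
triples are inversion triples, any two (non-basement) cells in the same row have
distinct entries. -/
theorem same_row_entries_distinct (F : SSAF) (i1 i2 j : ℕ)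
    (hne : i1 ≠ i2) (hj : 1 ≤ j) (h1 : j ≤ F.shape i1) (h2 : j ≤ F.shape i2) :
    F.entry i1 j ≠ F.entry i2 j := by
  rcases hne.lt_or_gt with h | h
  · exact aux_distinct F i1 i2 j h hj h1 h2
  · exact (aux_distinct F i2 i1 j h hj h2 h1).symm
end

section
/- If F is a filling of an augmented composition diagram with no descents such that every type A and type B triple is an inversion triple, then for any cell a in row j and any cell b in row j+1 with b strictly to the right of a, F(a) ≠ F(b). -/
/-- In a descent-free augmented filling all of whose type A and type B
triples are inversion triples, a cell in row j and a cell strictly to its right in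
row j+1 have distinct entries. -/
theorem attacking_adjacent_rows_distinct (F : SSAF) (i1 i2 j : ℕ)
    (hlt : i1 < i2) (ha : j ≤ F.shape i1) (hb : j + 1 ≤ F.shape i2) :
    F.entry i1 j ≠ F.entry i2 (j + 1) := by
  intro heq
  rcases lt_or_ge (F.shape i1) (F.shape i2) with h | h
  · have hB := F.typeB i1 i2 j hlt h ha hb
    rw [heq] at hB
    simp [ind] at hB
  · have hA := F.typeA i1 i2 (j + 1) hlt h (Nat.le_add_left 1 j) hb
    simp only [Nat.add_sub_cancel] at hA
    rw [← heq] at hA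
    simp [ind] at hA
end

section
/- Every semi-skyline augmented filling is a non-attacking filling; that is, the descent-free and all-triples-inverted conditions imply that no two attacking cells have equal entries. -/
/-- Two cells of the augmented diagram attack each other if they lie in the same row,
or in adjacent rows with the higher cell strictly to the right of the lower cell. -/
def Attacks (a b : ℕ × ℕ) : Prop :=
  a ≠ b ∧ (a.2 = b.2 ∨ (b.2 = a.2 + 1 ∧ a.1 < b.1) ∨ (a.2 = b.2 + 1 ∧ b.1 < a.1))


lemma ind_self (x : ℕ) : ind x x = 0 := by simp [ind]

lemma ssaf_same_row (F : SSAF) (i1 i2 j : ℕ) (h12 : i1 < i2)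
    (hj1 : j ≤ F.shape i1) (hj2 : j ≤ F.shape i2) (hj : 1 ≤ j) :
    F.entry i1 j ≠ F.entry i2 j := by
  intro heq
  rcases le_or_gt (F.shape i2) (F.shape i1) with hle | hlt
  · have h := F.typeA i1 i2 j h12 hle hj hj2
    rw [heq] at h
    have h0 := ind_self (F.entry i2 j)
    linarith
  · have h := F.typeB i1 i2 j h12 hlt hj1 (by omega)
    rw [heq] at h
    have h0 := ind_self (F.entry i2 j)
    linarith

lemma ssaf_diag (F : SSAF) (i1 i2 j : ℕ) (h12 : i1 < i2)
    (hj1 : j ≤ F.shape i1) (hj2 : j + 1 ≤ F.shape i2) :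
    F.entry i1 j ≠ F.entry i2 (j + 1) := by
  intro heq
  rcases le_or_gt (F.shape i2) (F.shape i1) with hle | hlt
  · have h := F.typeA i1 i2 (j + 1) h12 hle (by omega) hj2
    simp only [Nat.add_sub_cancel] at h
    rw [← heq] at h
    have h0 := ind_self (F.entry i1 j)
    linarith
  · have h := F.typeB i1 i2 j h12 hlt hj1 hj2
    rw [heq] at h
    have h0 := ind_self (F.entry i2 (j + 1))
    linarith

/-- Every semi-skyline augmented filling is non-attacking: the descent-free
and all-triples-inverted conditions imply that no two attacking cells of the augmented
diagram carry equal entries. -/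
theorem ssaf_non_attacking (F : SSAF) (a b : ℕ × ℕ)
    (hA : a.2 ≤ F.shape a.1) (hB : b.2 ≤ F.shape b.1)
    (haC : 1 ≤ a.1) (hbC : 1 ≤ b.1)
    (hatt : Attacks a b) :
    F.entry a.1 a.2 ≠ F.entry b.1 b.2 := by
  obtain ⟨hne, hrow⟩ := hatt
  rcases hrow with hrow | ⟨hrow, hlt⟩ | ⟨hrow, hlt⟩
  · -- same row
    rcases Nat.eq_zero_or_pos a.2 with hz | hpos
    · have hbz : b.2 = 0 := by omega
      rw [hz, hbz, F.basement, F.basement]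
      intro h
      exact hne (Prod.ext h (by omega))
    · rcases lt_trichotomy a.1 b.1 with h | h | h
      · rw [hrow]
        exact ssaf_same_row F a.1 b.1 b.2 h (hrow ▸ hA) hB (by omega)
      · exact absurd (Prod.ext h hrow) hne
      · rw [hrow]
        exact (ssaf_same_row F b.1 a.1 b.2 h hB (hrow ▸ hA) (by omega)).symm
  · -- b one row above a, strictly right
    rw [hrow]
    exact ssaf_diag F a.1 b.1 a.2 hlt hA (hrow ▸ hB)
  · -- a one row above b, strictly right
    rw [hrow]
    exact (ssaf_diag F b.1 a.1 b.2 hlt hB (hrow ▸ hA)).symm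
end

section
/- Let F be a semi-skyline augmented filling and let (a,b,c) be a type B triple with a and c in the same row, a strictly left of c, the column of c strictly taller than the column of a, and b directly above c. Then F(a) < F(c). -/
/-- If `(a,b,c)` is a type B triple of a semi-skyline augmented filling,
with `a = (i1,j)` and `c = (i2,j)` in the same row, `a` strictly left of `c`, the
column of `c` strictly taller than that of `a`, and `b = (i2,j+1)` directly above
`c`, then `F(a) < F(c)`. -/
theorem typeB_bottom_lt (F : SSAF) (i1 i2 j : ℕ)
    (hlt : i1 < i2) (hcol : F.shape i1 < F.shape i2)
    (ha : j ≤ F.shape i1) (hb : j + 1 ≤ F.shape i2) :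
    F.entry i1 j < F.entry i2 j := by
  clear hb
  induction j with
  | zero => rw [F.basement, F.basement]; exact hlt
  | succ j ih =>
    have hj : j ≤ F.shape i1 := Nat.le_of_succ_le ha
    have hb2 : j + 1 ≤ F.shape i2 := le_trans ha (Nat.le_of_lt hcol)
    have hB := F.typeB i1 i2 j hlt hcol hj hb2
    have hnd2 : F.entry i2 (j + 1) ≤ F.entry i2 j := F.noDescent i2 j hb2
    have hnd1 : F.entry i1 (j + 1) ≤ F.entry i1 j := F.noDescent i1 j ha
    have hih := ih hj
    simp only [ind] at hB
    split_ifs at hB <;> omega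
end

section
/- In any semi-skyline augmented filling of a weak composition γ, the entry in the bottom cell (row 1) of every nonempty column i equals i. -/
/-- In any semi-skyline augmented filling, the entry in the bottom
(row 1) cell of every nonempty column `i` equals `i`. -/
theorem first_row_entry_eq_column (F : SSAF) (i : ℕ) (hi : 1 ≤ F.shape i) :
    F.entry i 1 = i := by
  have h1 : F.entry i 1 ≤ i := by
    have := F.noDescent i 0 (by simpa using hi)
    simpa [F.basement] using this
  have hpos : 1 ≤ F.entry i 1 := F.pos i 1 le_rfl hi
  by_contra hne
  set k := F.entry i 1 with hkdef
  have hk : k < i := lt_of_le_of_ne h1 hne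
  rcases le_or_gt (F.shape i) (F.shape k) with h | h
  · have hA := F.typeA k i 1 hk h le_rfl hi
    have ek1 : F.entry k 1 ≤ k := by
      have := F.noDescent k 0 (by simpa using le_trans hi h)
      simpa [F.basement] using this
    simp only [ind, F.basement, ← hkdef] at hA
    split_ifs at hA <;> omega
  · have hB := F.typeB k i 0 hk h (Nat.zero_le _) hi
    simp only [ind, F.basement, ← hkdef] at hB
    split_ifs at hB <;> omega
end

section
/- Given a semi-skyline augmented filling F, the array ρ(F) obtained by sorting the multiset of entries of each row of F into strictly decreasing order (left-justified) is a reverse semi-standard Young tableau: its rows are strictly decreasing left to right and its columns are weakly decreasing bottom to top. -/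
/-!
The type A and type B conditions forbid two equal entries in a row `j ≥ 1`, so row `j` of `F`
has one distinct entry per column of height at least `j`. Pushing the cells of row `j + 1` down
one step is then an injection into row `j` that does not decrease entries (no descents), so for
every `x` row `j + 1` has at most as many entries `≥ x` as row `j`. This domination of the
counts forces the entrywise comparison of the two rows sorted decreasingly (and, at `x = 0`,
the comparison of their lengths).
-/

open Finset

namespace Finset

variable {α : Type*} [LinearOrder α]

theorem le_getElem_sort_ge_iff (B : Finset α) {k : ℕ} (hk : k < (B.sort (· ≥ ·)).length)
    (x : α) : x ≤ (B.sort (· ≥ ·))[k] ↔ k + 1 ≤ #{b ∈ B | x ≤ b} := by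
  set l := B.sort (· ≥ ·)
  have hl : l.SortedGT := B.sortedGT_sort
  constructor
  · intro hx
    have hsub : (l.take (k + 1)).toFinset ⊆ {b ∈ B | x ≤ b} := by
      intro b hb
      obtain ⟨m, hm, rfl⟩ := List.mem_take_iff_getElem.1 (List.mem_toFinset.1 hb)
      have hmk : l[k] ≤ l[m] := hl.getElem_le_getElem_iff.2 (by omega)
      exact mem_filter.2 ⟨(mem_sort _).1 (List.getElem_mem _), hx.trans hmk⟩
    calc k + 1 = #(l.take (k + 1)).toFinset := by
          rw [List.toFinset_card_of_nodup (hl.nodup.sublist (List.take_sublist _ _)),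
            List.length_take]
          omega
      _ ≤ #{b ∈ B | x ≤ b} := card_le_card hsub
  · intro hcard
    by_contra! hx
    have hsub : {b ∈ B | x ≤ b} ⊆ (l.take k).toFinset := by
      intro b hb
      obtain ⟨hbB, hxb⟩ := mem_filter.1 hb
      obtain ⟨m, hm, rfl⟩ := List.getElem_of_mem ((mem_sort (· ≥ ·)).2 hbB)
      have hmk : m < k := hl.getElem_lt_getElem_iff.1 (hx.trans_le hxb)
      exact List.mem_toFinset.2 (List.mem_take_iff_getElem.2 ⟨m, by omega, rfl⟩)
    have := (card_le_card hsub).trans (List.toFinset_card_le _)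
    rw [List.length_take] at this
    omega

theorem getD_sort_ge_le_of_card_filter_le {A B : Finset α}
    (h : ∀ x, #{a ∈ A | x ≤ a} ≤ #{b ∈ B | x ≤ b}) {k : ℕ}
    (hk : k < (A.sort (· ≥ ·)).length) (d : α) :
    (A.sort (· ≥ ·)).getD k d ≤ (B.sort (· ≥ ·)).getD k d := by
  set x := (A.sort (· ≥ ·))[k]
  have hB : k + 1 ≤ #{b ∈ B | x ≤ b} := ((A.le_getElem_sort_ge_iff hk x).1 le_rfl).trans (h x)
  have hkB : k < (B.sort (· ≥ ·)).length := by
    rw [length_sort]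
    exact hB.trans (card_filter_le _ _)
  rw [List.getD_eq_getElem _ _ hk, List.getD_eq_getElem _ _ hkB]
  exact (B.le_getElem_sort_ge_iff hkB x).2 hB

end Finset

namespace SSAF

variable (F : SSAF)

def columnsReaching (N j : ℕ) : Finset ℕ := {i ∈ range N | j ≤ F.shape i}

def rowEntries (N j : ℕ) : Finset ℕ := (F.columnsReaching N j).image (F.entry · j)

theorem entry_ne_of_lt {i₁ i₂ j : ℕ} (hj : 1 ≤ j) (h₁₂ : i₁ < i₂) (h₁ : j ≤ F.shape i₁)
    (h₂ : j ≤ F.shape i₂) : F.entry i₁ j ≠ F.entry i₂ j := by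
  intro he
  -- equal entries in one row give the triple through these two cells inversion count 0, not 1
  rcases le_or_gt (F.shape i₂) (F.shape i₁) with h | h
  · have := F.typeA i₁ i₂ j h₁₂ h hj h₂
    simp [he, ind] at this
  · have := F.typeB i₁ i₂ j h₁₂ h h₁ (by omega)
    simp [he, ind] at this

theorem injOn_entry {j : ℕ} (hj : 1 ≤ j) : Set.InjOn (F.entry · j) {i | j ≤ F.shape i} := by
  intro i₁ h₁ i₂ h₂ he
  by_contra hne
  rcases lt_or_gt_of_ne hne with h | h
  · exact F.entry_ne_of_lt hj h h₁ h₂ he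
  · exact F.entry_ne_of_lt hj h h₂ h₁ he.symm

theorem card_filter_rowEntries (N : ℕ) {j : ℕ} (hj : 1 ≤ j) (x : ℕ) :
    #{b ∈ F.rowEntries N j | x ≤ b} = #{i ∈ F.columnsReaching N j | x ≤ F.entry i j} := by
  rw [rowEntries, filter_image, card_image_of_injOn]
  refine (F.injOn_entry hj).mono fun i hi => ?_
  exact (mem_filter.1 (filter_subset _ _ hi)).2

theorem card_filter_rowEntries_succ_le (N : ℕ) {j : ℕ} (hj : 1 ≤ j) (x : ℕ) :
    #{b ∈ F.rowEntries N (j + 1) | x ≤ b} ≤ #{b ∈ F.rowEntries N j | x ≤ b} := by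
  rw [F.card_filter_rowEntries N hj, F.card_filter_rowEntries N (by omega)]
  refine card_le_card fun i => ?_
  simp only [columnsReaching, mem_filter]
  rintro ⟨⟨hi, hsh⟩, hx⟩
  exact ⟨⟨hi, by omega⟩, hx.trans (F.noDescent i j hsh)⟩

end SSAF

theorem rho_is_reverse_ssyt_general (F : SSAF) (N : ℕ)
    (L : ℕ → List ℕ)
    (hL : ∀ j, L j = Finset.sort
      (((Finset.range N).filter (fun i => j ≤ F.shape i)).image (fun i => F.entry i j)) (· ≥ ·)) :
    ∀ j, 1 ≤ j →
      (L j).Pairwise (· > ·) ∧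
      (L (j + 1)).length ≤ (L j).length ∧
      ∀ k, k < (L (j + 1)).length → (L (j + 1)).getD k 0 ≤ (L j).getD k 0 := by
  intro j hj
  have hrow : ∀ j, L j = (F.rowEntries N j).sort (· ≥ ·) := hL
  have hdom := F.card_filter_rowEntries_succ_le N hj
  simp only [hrow]
  refine ⟨(sortedGT_sort _).pairwise, ?_, fun k hk => getD_sort_ge_le_of_card_filter_le hdom hk 0⟩
  simpa only [length_sort, zero_le, filter_true] using hdom 0

/-- Sorting each row of a semi-skyline augmented filling into strictly
decreasing order yields a reverse semi-standard Young tableau: each row list is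
strictly decreasing, successive rows weakly shorten (so the shape is a Young diagram),
and the columns are weakly decreasing from bottom to top. -/
theorem rho_is_reverse_ssyt (F : SSAF) (N : ℕ) (hN : ∀ i, N ≤ i → F.shape i = 0)
    (L : ℕ → List ℕ)
    (hL : ∀ j, L j = Finset.sort
      (((Finset.range N).filter (fun i => j ≤ F.shape i)).image (fun i => F.entry i j)) (· ≥ ·)) :
    ∀ j, 1 ≤ j →
      (L j).Pairwise (· > ·) ∧
      (L (j + 1)).length ≤ (L j).length ∧
      ∀ k, k < (L (j + 1)).length → (L (j + 1)).getD k 0 ≤ (L j).getD k 0 :=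
  rho_is_reverse_ssyt_general F N L hL
end

section
/- Let {R_i} be a finite collection of finite sets of positive integers such that for every i ≥ 1 and every positive integer α, the number of elements of R_i that are ≥ α is at least the number of elements of R_{i+1} that are ≥ α. Then there exists exactly one semi-skyline augmented filling whose set of entries in row i equals R_i for every i. -/
/-- The set of entries appearing in row `j ≥ 1` of a semi-skyline augmented filling. -/
def SSAF.rowSet (F : SSAF) (j : ℕ) : Set ℕ :=
  {v | ∃ i, j ≤ F.shape i ∧ F.entry i j = v}

/-!
Read the rows of a filling as functions `ℕ → ℕ` of the column, with `0` for an empty cell.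
Two consecutive rows `prev`, `cur` satisfy the insertion rule `IsGreedyRow` when every entry
of `cur` lies weakly below its upper neighbour, and every column to its left whose `prev`
entry is at least as large already carries a larger entry of `cur`. In an SSAF the type A
triples give this rule directly, and the type B triples give it because, when a column to the
left is shorter, each of its entries is smaller than the entry one row lower in the longer column.
Conversely, rows obeying the rule satisfy both triple conditions.

The rule determines a row from the previous row and its set of entries: comparing two
solutions from the largest entry downwards, the leftmost candidate column is forced each
time. Inserting the entries in decreasing order into the leftmost free candidate column
produces a solution (the map `ρ⁻¹`), and the dominance hypothesis on `R` is exactly what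
guarantees a free candidate column at every step.
-/

structure IsGreedyRow (prev cur : ℕ → ℕ) : Prop where
  le_prev : ∀ i, cur i ≠ 0 → cur i ≤ prev i
  lt_of_le_prev : ∀ {i' i}, i' < i → cur i ≠ 0 → cur i ≤ prev i' → cur i < cur i'

namespace IsGreedyRow

variable {prev cur cur₁ cur₂ : ℕ → ℕ}

theorem ind_typeA (h : IsGreedyRow prev cur) {i₁ i₂ : ℕ} (hi : i₁ < i₂)
    (h₁ : cur i₁ ≠ 0) (h₂ : cur i₂ ≠ 0) :
    ind (cur i₁) (cur i₂) + ind (cur i₂) (prev i₁) - ind (cur i₁) (prev i₁) = 1 := by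
  have := h.le_prev i₁ h₁
  by_cases hle : cur i₂ ≤ prev i₁
  · have := h.lt_of_le_prev hi h₂ hle
    unfold ind; split_ifs <;> omega
  · unfold ind; split_ifs <;> omega

theorem eq_self_of_id (h : IsGreedyRow id cur) {i : ℕ} (hi : cur i ≠ 0) : cur i = i := by
  have hle : cur i ≤ i := h.le_prev i hi
  by_contra hne
  have hlt := h.lt_of_le_prev (lt_of_le_of_ne hle hne) hi le_rfl
  have := h.le_prev (cur i) (by omega)
  simp only [id] at this
  omega

theorem eq_of_eq_above (h₁ : IsGreedyRow prev cur₁) (h₂ : IsGreedyRow prev cur₂)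
    (hrange : Set.range cur₁ \ {0} = Set.range cur₂ \ {0}) {x : ℕ} (hx : x ≠ 0)
    (habove : ∀ y, x < y → ∀ i, cur₁ i = y ↔ cur₂ i = y) {i : ℕ} (hi : cur₁ i = x) :
    cur₂ i = x := by
  obtain ⟨⟨i₂, hi₂⟩, -⟩ : x ∈ Set.range cur₂ \ {0} := hrange ▸ ⟨⟨i, hi⟩, hx⟩
  subst hi
  rcases lt_trichotomy i i₂ with hlt | rfl | hgt
  · have := h₂.lt_of_le_prev hlt (hi₂ ▸ hx) (hi₂ ▸ h₁.le_prev i hx)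
    have := (habove _ (hi₂ ▸ this) i).2 rfl
    omega
  · exact hi₂
  · have := h₁.lt_of_le_prev hgt hx (hi₂ ▸ h₂.le_prev i₂ (hi₂ ▸ hx))
    have := (habove _ (hi₂ ▸ this) i₂).1 rfl
    omega

theorem eq_of_range_eq (h₁ : IsGreedyRow prev cur₁) (h₂ : IsGreedyRow prev cur₂)
    (hrange : Set.range cur₁ \ {0} = Set.range cur₂ \ {0})
    (hfin : (Set.range cur₁ \ {0}).Finite) : cur₁ = cur₂ := by
  obtain ⟨B, hB⟩ := hfin.bddAbove
  -- downward induction on `x`, starting from the values above `B`, which occur in neither row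
  have hagree : ∀ n x, B < x + n → x ≠ 0 → ∀ i, cur₁ i = x ↔ cur₂ i = x := by
    intro n
    induction n with
    | zero =>
      intro x hx hx0 i
      have h₁ : x ∉ Set.range cur₁ \ {0} := fun hmem => by have := hB hmem; omega
      have h₂ : x ∉ Set.range cur₂ \ {0} := hrange ▸ h₁
      simp only [Set.mem_sdiff, Set.mem_range, Set.mem_singleton_iff, not_and, not_not] at h₁ h₂
      exact ⟨fun h => absurd (h₁ ⟨i, h⟩) hx0, fun h => absurd (h₂ ⟨i, h⟩) hx0⟩
    | succ n ih =>
      intro x hx hx0 i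
      have habove : ∀ y, x < y → ∀ i, cur₁ i = y ↔ cur₂ i = y :=
        fun y hy => ih y (by omega) (by omega)
      exact ⟨h₁.eq_of_eq_above h₂ hrange hx0 habove,
        h₂.eq_of_eq_above h₁ hrange.symm hx0 fun y hy i => (habove y hy i).symm⟩
  funext i
  by_cases h0 : cur₁ i = 0
  · by_contra hne
    have := (hagree (B + 1) (cur₂ i) (by omega) (by omega) i).2 rfl
    omega
  · exact ((hagree (B + 1) _ (by omega) h0 i).1 rfl).symm

theorem eq_zero_of_prev_eq_zero (h : IsGreedyRow prev cur) {i : ℕ} (hi : prev i = 0) :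
    cur i = 0 := by
  by_contra hne
  have := h.le_prev i hne
  omega

theorem update {c x : ℕ} (hc : IsLeast {i | x ≤ prev i} c)
    (h : IsGreedyRow (Function.update prev c 0) cur) (hlt : ∀ i, cur i < x) :
    IsGreedyRow prev (Function.update cur c x) where
  le_prev i hi := by
    by_cases hic : i = c
    · subst hic
      simpa using hc.1
    · rw [Function.update_of_ne hic] at hi ⊢
      simpa [Function.update_of_ne hic] using h.le_prev i hi
  lt_of_le_prev {i' i} hi'i hi hle := by
    by_cases hic : i = c
    · subst hic
      rw [Function.update_self] at hle
      exact absurd (hc.2 hle) (by omega)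
    · rw [Function.update_of_ne hic] at hi hle ⊢
      by_cases hi'c : i' = c
      · subst hi'c
        simpa using hlt i
      · rw [Function.update_of_ne hi'c]
        exact h.lt_of_le_prev hi'i hi (by rwa [Function.update_of_ne hi'c])

end IsGreedyRow

theorem range_update_sdiff {α β : Type*} [DecidableEq α] {f : α → β} {c : α} {x b : β}
    (hc : f c = b) (hx : x ≠ b) :
    Set.range (Function.update f c x) \ {b} = insert x (Set.range f \ {b}) := by
  ext v
  simp only [Set.mem_sdiff, Set.mem_range, Set.mem_singleton_iff, Set.mem_insert_iff]
  constructor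
  · rintro ⟨⟨i, rfl⟩, hv⟩
    by_cases hic : i = c
    · subst hic
      simp
    · simp only [Function.update_of_ne hic] at hv ⊢
      exact Or.inr ⟨⟨i, rfl⟩, hv⟩
  · rintro (rfl | ⟨⟨i, rfl⟩, hv⟩)
    · exact ⟨⟨c, Function.update_self ..⟩, hx⟩
    · have hic : i ≠ c := fun h => hv (h ▸ hc)
      exact ⟨⟨i, Function.update_of_ne hic ..⟩, hv⟩

theorem setOf_le_update_zero {α : Type*} [DecidableEq α] {prev : α → ℕ} {c : α} {y : ℕ}
    (hy : 0 < y) :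
    {i | y ≤ Function.update prev c 0 i} = {i | y ≤ prev i} \ {c} := by
  ext i
  by_cases hic : i = c
  · subst hic
    simpa using hy.ne'
  · simp [hic]

-- A column that has received an entry is marked as used by resetting its `prev` entry to `0`.
noncomputable def greedyRow (prev : ℕ → ℕ) : List ℕ → ℕ → ℕ
  | [] => 0
  | x :: xs =>
    Function.update (greedyRow (Function.update prev (sInf {i | x ≤ prev i}) 0) xs)
      (sInf {i | x ≤ prev i}) x

theorem greedyRow_spec {L : List ℕ} (hL : L.Pairwise (· > ·)) (hpos : ∀ x ∈ L, 0 < x)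
    {prev : ℕ → ℕ}
    (hroom : ∀ x ∈ L, ((L.filter (x ≤ ·)).length : ℕ∞) ≤ {i | x ≤ prev i}.encard) :
    IsGreedyRow prev (greedyRow prev L) ∧ Set.range (greedyRow prev L) \ {0} = {x | x ∈ L} := by
  induction L generalizing prev with
  | nil =>
    refine ⟨⟨fun i hi => absurd rfl hi, fun _ hi => absurd rfl hi⟩, ?_⟩
    ext v
    simp [greedyRow]
  | cons x xs ih =>
    have hxs : ∀ y ∈ xs, y < x := fun y hy => List.rel_of_pairwise_cons hL hy
    have hx : 0 < x := hpos x List.mem_cons_self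
    have hne : {i | x ≤ prev i}.Nonempty := by
      rw [← Set.one_le_encard_iff_nonempty]
      refine le_trans ?_ (hroom x List.mem_cons_self)
      simp
    set c := sInf {i | x ≤ prev i}
    have hc : IsLeast {i | x ≤ prev i} c := ⟨Nat.sInf_mem hne, fun i hi => Nat.sInf_le hi⟩
    have hroom' : ∀ y ∈ xs, ((xs.filter (y ≤ ·)).length : ℕ∞) ≤
        {i | y ≤ Function.update prev c 0 i}.encard := by
      intro y hy
      have hyc : c ∈ {i | y ≤ prev i} := le_trans (hxs y hy).le hc.1
      have := hroom y (List.mem_cons_of_mem _ hy)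
      rw [List.filter_cons_of_pos (by simpa using (hxs y hy).le), List.length_cons,
        ← Set.encard_sdiff_singleton_add_one hyc, Nat.cast_succ,
        ENat.add_le_add_iff_right ENat.one_ne_top] at this
      rwa [setOf_le_update_zero (hpos y (List.mem_cons_of_mem _ hy))]
    obtain ⟨hgreedy, hrange⟩ :=
      ih hL.of_cons (fun y hy => hpos y (List.mem_cons_of_mem _ hy)) hroom'
    have hlt : ∀ i, greedyRow (Function.update prev c 0) xs i < x := by
      intro i
      by_cases h0 : greedyRow (Function.update prev c 0) xs i = 0
      · omega
      · have : greedyRow (Function.update prev c 0) xs i ∈ {y | y ∈ xs} :=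
          hrange ▸ ⟨⟨i, rfl⟩, h0⟩
        exact hxs _ this
    refine ⟨hgreedy.update hc hlt, ?_⟩
    show Set.range (Function.update _ c x) \ {0} = _
    rw [range_update_sdiff (hgreedy.eq_zero_of_prev_eq_zero (by simp)) hx.ne', hrange]
    ext v
    simp

namespace SSAF

variable (G : SSAF)

theorem entry_ne_zero_iff {i j : ℕ} (hj : 1 ≤ j) : G.entry i j ≠ 0 ↔ j ≤ G.shape i := by
  constructor
  · intro h
    by_contra hlt
    exact h (G.zero_outside i j (by omega))
  · intro h
    have := G.pos i j hj h
    omega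

theorem rowSet_eq {j : ℕ} (hj : 1 ≤ j) :
    G.rowSet j = Set.range (fun i => G.entry i j) \ {0} := by
  ext v
  simp only [rowSet, Set.mem_ofPred_eq, Set.mem_sdiff, Set.mem_range, Set.mem_singleton_iff]
  constructor
  · rintro ⟨i, hi, rfl⟩
    exact ⟨⟨i, rfl⟩, (G.entry_ne_zero_iff hj).2 hi⟩
  · rintro ⟨⟨i, rfl⟩, hv⟩
    exact ⟨i, (G.entry_ne_zero_iff hj).1 hv, rfl⟩

theorem finite_rowSet {j : ℕ} (hj : 1 ≤ j) : (G.rowSet j).Finite := by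
  obtain ⟨N, hN⟩ := G.support
  refine ((Set.finite_Iio N).image fun i => G.entry i j).subset ?_
  rintro v ⟨i, hi, rfl⟩
  refine ⟨i, Set.mem_Iio.2 ?_, rfl⟩
  by_contra h
  have := hN i (by omega)
  omega

section

variable {G} {i₁ i₂ : ℕ} (hi : i₁ < i₂) (hs : G.shape i₁ < G.shape i₂)
include hi hs

theorem entry_lt_entry_succ_of_lt {j : ℕ} (hj₁ : j ≤ G.shape i₁) (hj₂ : j + 1 ≤ G.shape i₂)
    (hlt : G.entry i₁ j < G.entry i₂ j) : G.entry i₁ j < G.entry i₂ (j + 1) := by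
  have hB := G.typeB i₁ i₂ j hi hs hj₁ hj₂
  have := G.noDescent i₂ j hj₂
  unfold ind at hB
  split_ifs at hB <;> omega

theorem entry_lt_entry_of_shape_lt {j : ℕ} (hj : j ≤ G.shape i₁) :
    G.entry i₁ j < G.entry i₂ j := by
  induction j with
  | zero => simpa [G.basement] using hi
  | succ j ih =>
    have := entry_lt_entry_succ_of_lt hi hs (by omega) (by omega) (ih (by omega))
    have := G.noDescent i₁ j hj
    omega

end

theorem isGreedyRow (j : ℕ) :
    IsGreedyRow (fun i => G.entry i j) (fun i => G.entry i (j + 1)) where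
  le_prev i hi := G.noDescent i j ((G.entry_ne_zero_iff (by omega)).1 hi)
  lt_of_le_prev {i' i} hlt hi hle := by
    have hsi : j + 1 ≤ G.shape i := (G.entry_ne_zero_iff (by omega)).1 hi
    have hsi' : j ≤ G.shape i' := by
      rcases Nat.eq_zero_or_pos j with rfl | hj
      · omega
      · exact (G.entry_ne_zero_iff hj).1 (by omega)
    rcases lt_or_ge (G.shape i') (G.shape i) with hs | hs
    · have := entry_lt_entry_succ_of_lt hlt hs hsi' hsi (entry_lt_entry_of_shape_lt hlt hs hsi')
      omega
    · have hA := G.typeA i' i (j + 1) hlt hs (by omega) hsi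
      have := G.noDescent i' j (by omega)
      simp only [Nat.add_sub_cancel] at hA
      unfold ind at hA
      split_ifs at hA <;> omega

theorem eq_of_entry_eq {G G' : SSAF} (h : G.entry = G'.entry) : G = G' := by
  have hshape : G.shape = G'.shape := by
    funext i
    have key : ∀ j, 1 ≤ j → (j ≤ G.shape i ↔ j ≤ G'.shape i) := fun j hj => by
      rw [← G.entry_ne_zero_iff hj, ← G'.entry_ne_zero_iff hj, h]
    have := key (G.shape i + 1) (by omega)
    have := key (G'.shape i + 1) (by omega)
    omega
  cases G
  cases G'
  cases hshape
  cases h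
  rfl

theorem eq_of_rowSet_eq {G G' : SSAF} (h : ∀ j, 1 ≤ j → G.rowSet j = G'.rowSet j) : G = G' := by
  have hrow : ∀ j, (fun i => G.entry i j) = (fun i => G'.entry i j) := by
    intro j
    induction j with
    | zero => funext i; rw [G.basement, G'.basement]
    | succ j ih =>
      have h' := G'.isGreedyRow j
      rw [← ih] at h'
      refine (G.isGreedyRow j).eq_of_range_eq h' ?_ ?_
      · rw [← G.rowSet_eq (by omega), ← G'.rowSet_eq (by omega), h _ (by omega)]
      · rw [← G.rowSet_eq (by omega)]
        exact G.finite_rowSet (by omega)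
  exact eq_of_entry_eq (funext fun i => funext fun j => congrFun (hrow j) i)

end SSAF

noncomputable def colHeight (row : ℕ → ℕ → ℕ) (i : ℕ) : ℕ := sInf {n | row (n + 1) i = 0}

section ofGreedyRows

variable {row : ℕ → ℕ → ℕ} (hrow : ∀ j, IsGreedyRow (row j) (row (j + 1)))
include hrow

theorem row_eq_zero_of_le {i j k : ℕ} (hjk : j ≤ k) (h : row j i = 0) : row k i = 0 := by
  induction k, hjk using Nat.le_induction with
  | base => exact h
  | succ k _ ih => exact (hrow k).eq_zero_of_prev_eq_zero ih

theorem row_lt_row_of_row_succ_le {i₁ i₂ j k : ℕ} (hi : i₁ < i₂)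
    (hle : row (j + 1) i₂ ≤ row j i₁) (hk : j + 1 ≤ k) (hk0 : row k i₂ ≠ 0) :
    row k i₂ < row k i₁ := by
  induction k, hk using Nat.le_induction with
  | base => exact (hrow j).lt_of_le_prev hi hk0 hle
  | succ k _ ih =>
    have hprev : row k i₂ ≠ 0 := fun h => hk0 ((hrow k).eq_zero_of_prev_eq_zero h)
    exact (hrow k).lt_of_le_prev hi hk0 (le_trans ((hrow k).le_prev i₂ hk0) (ih hprev).le)

variable (hend : ∃ M, ∀ i, row M i = 0)
include hend

theorem le_colHeight_iff {i j : ℕ} (hj : 1 ≤ j) : j ≤ colHeight row i ↔ row j i ≠ 0 := by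
  obtain ⟨M, hM⟩ := hend
  have hne : {n | row (n + 1) i = 0}.Nonempty :=
    ⟨M, row_eq_zero_of_le hrow (by omega) (hM i)⟩
  constructor
  · intro hj' h0
    have := Nat.sInf_le (show j - 1 ∈ {n | row (n + 1) i = 0} by simpa [Nat.sub_add_cancel hj])
    unfold colHeight at hj'
    omega
  · intro h0
    by_contra hlt
    unfold colHeight at hlt
    exact h0 (row_eq_zero_of_le hrow (by omega) (Nat.sInf_mem hne))

theorem ind_typeA_of_colHeight {i₁ i₂ j : ℕ} (hi : i₁ < i₂)
    (hs : colHeight row i₂ ≤ colHeight row i₁) (hj : 1 ≤ j) (hj₂ : j ≤ colHeight row i₂) :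
    ind (row j i₁) (row j i₂) + ind (row j i₂) (row (j - 1) i₁)
      - ind (row j i₁) (row (j - 1) i₁) = 1 := by
  obtain ⟨k, rfl⟩ : ∃ k, j = k + 1 := ⟨j - 1, by omega⟩
  exact (hrow k).ind_typeA hi ((le_colHeight_iff hrow hend hj).1 (hj₂.trans hs))
    ((le_colHeight_iff hrow hend hj).1 hj₂)

theorem ind_typeB_of_colHeight {i₁ i₂ j : ℕ} (hi : i₁ < i₂)
    (hs : colHeight row i₁ < colHeight row i₂) (hj₂ : j + 1 ≤ colHeight row i₂) :
    ind (row (j + 1) i₂) (row j i₁) + ind (row j i₁) (row j i₂)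
      - ind (row (j + 1) i₂) (row j i₂) = 1 := by
  have hb' : row (j + 1) i₂ ≠ 0 := (le_colHeight_iff hrow hend (by omega)).1 hj₂
  have := (hrow j).le_prev i₂ hb'
  have hlt : row j i₁ < row (j + 1) i₂ := by
    by_contra! hle
    have h₂ : row (colHeight row i₂) i₂ ≠ 0 := (le_colHeight_iff hrow hend (by omega)).1 le_rfl
    have := row_lt_row_of_row_succ_le hrow hi hle hj₂ h₂
    have := (le_colHeight_iff hrow hend (by omega)).2 (show row (colHeight row i₂) i₁ ≠ 0 by omega)
    omega
  unfold ind
  split_ifs <;> omega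

end ofGreedyRows

noncomputable def SSAF.ofGreedyRows (row : ℕ → ℕ → ℕ)
    (hrow : ∀ j, IsGreedyRow (row j) (row (j + 1))) (h0 : ∀ i, row 0 i = i)
    (hend : ∃ M, ∀ i, row M i = 0) (hsupp : ∃ N, ∀ i, N ≤ i → row 1 i = 0) : SSAF where
  shape := colHeight row
  entry i j := row j i
  shape_zero := Nat.sInf_eq_zero.2 (Or.inl ((hrow 0).eq_zero_of_prev_eq_zero (h0 0)))
  support := hsupp.imp fun _ hN i hi => Nat.sInf_eq_zero.2 (Or.inl (hN i hi))
  basement := h0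
  pos _ _ hj hjs := Nat.one_le_iff_ne_zero.2 ((le_colHeight_iff hrow hend hj).1 hjs)
  zero_outside i j hj := by
    by_contra h
    have := (le_colHeight_iff hrow hend (by omega)).2 h
    omega
  noDescent i j hj := (hrow j).le_prev i ((le_colHeight_iff hrow hend (by omega)).1 hj)
  typeA _ _ _ hi hs hj hj₂ := ind_typeA_of_colHeight hrow hend hi hs hj hj₂
  typeB _ _ _ hi hs _ hj₂ := ind_typeB_of_colHeight hrow hend hi hs hj₂

theorem card_filter_le_encard {α β : Type*} [LinearOrder β] {f : α → β} {s : Finset β}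
    (hs : ↑s ⊆ Set.range f) (x : β) :
    ((s.filter (x ≤ ·)).card : ℕ∞) ≤ {i | x ≤ f i}.encard := by
  rw [← Set.encard_coe_eq_coe_finsetCard]
  refine le_trans (Set.encard_le_encard ?_) (Set.encard_image_le f _)
  intro v hv
  rw [Finset.coe_filter] at hv
  obtain ⟨i, rfl⟩ := hs hv.1
  exact ⟨i, hv.2, rfl⟩

theorem length_filter_sort {α : Type*} [LinearOrder α] (s : Finset α) (p : α → Bool) :
    ((s.sort (· ≥ ·)).filter p).length = (s.filter (p ·)).card := by
  rw [Finset.card_def, Finset.filter_val, ← Finset.sort_eq s (· ≥ ·), Multiset.filter_coe,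
    Multiset.coe_card]
  simp

theorem greedyRow_sort_spec {s : Finset ℕ} (hpos : ∀ x ∈ s, 1 ≤ x) {prev : ℕ → ℕ}
    (hroom : ∀ x ∈ s, ((s.filter (x ≤ ·)).card : ℕ∞) ≤ {i | x ≤ prev i}.encard) :
    IsGreedyRow prev (greedyRow prev (s.sort (· ≥ ·))) ∧
      Set.range (greedyRow prev (s.sort (· ≥ ·))) \ {0} = ↑s := by
  have := greedyRow_spec (s.sortedGT_sort.pairwise) (fun x hx => hpos x ((Finset.mem_sort _).1 hx))
    (fun x hx => by simpa [length_filter_sort] using hroom x ((Finset.mem_sort _).1 hx))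
  simpa [Finset.mem_sort] using this

noncomputable def greedyRows (R : ℕ → Finset ℕ) : ℕ → ℕ → ℕ
  | 0 => id
  | j + 1 => greedyRow (greedyRows R j) ((R (j + 1)).sort (· ≥ ·))

theorem greedyRows_spec {R : ℕ → Finset ℕ} (hpos : ∀ i, ∀ x ∈ R i, 1 ≤ x)
    (hdom : ∀ i, 1 ≤ i → ∀ α : ℕ,
      ((R (i + 1)).filter (fun x => α ≤ x)).card ≤ ((R i).filter (fun x => α ≤ x)).card)
    (j : ℕ) :
    IsGreedyRow (greedyRows R j) (greedyRows R (j + 1)) ∧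
      Set.range (greedyRows R (j + 1)) \ {0} = ↑(R (j + 1)) := by
  induction j with
  | zero =>
    refine greedyRow_sort_spec (hpos 1) fun x _ => ?_
    have : {i | x ≤ greedyRows R 0 i}.Infinite := Set.Ici_infinite x
    simp [this.encard_eq]
  | succ j ih =>
    refine greedyRow_sort_spec (hpos _) fun x _ => ?_
    calc (((R (j + 2)).filter (x ≤ ·)).card : ℕ∞)
        ≤ ((R (j + 1)).filter (x ≤ ·)).card := by exact_mod_cast hdom (j + 1) (by omega) x
      _ ≤ {i | x ≤ greedyRows R (j + 1) i}.encard :=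
        card_filter_le_encard (ih.2 ▸ Set.sdiff_subset) x

theorem exists_ssaf_rowSet_eq (R : ℕ → Finset ℕ)
    (hfin : ∃ M, ∀ i, M ≤ i → R i = ∅)
    (hpos : ∀ i, ∀ x ∈ R i, 1 ≤ x)
    (hdom : ∀ i, 1 ≤ i → ∀ α : ℕ,
      ((R (i + 1)).filter (fun x => α ≤ x)).card ≤ ((R i).filter (fun x => α ≤ x)).card) :
    ∃ F : SSAF, ∀ j, 1 ≤ j → F.rowSet j = ↑(R j) := by
  have hspec := greedyRows_spec hpos hdom
  have hmem : ∀ j i, greedyRows R (j + 1) i ≠ 0 → greedyRows R (j + 1) i ∈ R (j + 1) :=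
    fun j i h => Finset.mem_coe.1 ((hspec j).2 ▸ ⟨⟨i, rfl⟩, h⟩)
  have hend : ∃ M, ∀ i, greedyRows R M i = 0 := by
    obtain ⟨M, hM⟩ := hfin
    refine ⟨M + 1, fun i => ?_⟩
    by_contra h
    simpa [hM (M + 1) (by omega)] using hmem M i h
  have hsupp : ∃ N, ∀ i, N ≤ i → greedyRows R 1 i = 0 := by
    refine ⟨(R 1).sup id + 1, fun i hi => ?_⟩
    by_contra h
    have : greedyRows R 1 i ≤ (R 1).sup id := Finset.le_sup (f := id) (hmem 0 i h)
    rw [(hspec 0).1.eq_self_of_id h] at this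
    omega
  refine ⟨SSAF.ofGreedyRows (greedyRows R) (fun j => (hspec j).1) (fun _ => rfl) hend hsupp,
    fun j hj => ?_⟩
  obtain ⟨k, rfl⟩ : ∃ k, j = k + 1 := ⟨j - 1, by omega⟩
  rw [SSAF.rowSet_eq _ hj]
  exact (hspec k).2

/-- Given a finite collection of finite sets `R i` of positive integers
(rows indexed from 1) such that for all `i ≥ 1` and all `α`, the number of elements of
`R (i+1)` that are `≥ α` is at most the number of elements of `R i` that are `≥ α`,
there is exactly one semi-skyline augmented filling whose set of row-`i` entries is
`R i` for every `i ≥ 1`. -/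
theorem unique_ssaf_with_row_sets (R : ℕ → Finset ℕ)
    (hfin : ∃ M, ∀ i, M ≤ i → R i = ∅)
    (hpos : ∀ i, ∀ x ∈ R i, 1 ≤ x)
    (hdom : ∀ i, 1 ≤ i → ∀ α : ℕ,
      ((R (i + 1)).filter (fun x => α ≤ x)).card ≤ ((R i).filter (fun x => α ≤ x)).card) :
    ∃! F : SSAF, ∀ j, 1 ≤ j → F.rowSet j = ↑(R j) := by
  obtain ⟨F, hF⟩ := exists_ssaf_rowSet_eq R hfin hpos hdom
  exact ⟨F, hF, fun G hG => SSAF.eq_of_rowSet_eq fun j hj => by rw [hG j hj, hF j hj]⟩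
end

section
/- The map ρ sending a semi-skyline augmented filling F to the reverse semi-standard Young tableau with the same multiset of row entries (each row sorted decreasingly) is a weight-preserving bijection between semi-skyline augmented fillings (of arbitrary weak-composition shapes) and reverse semi-standard Young tableaux; moreover the shape of F is a rearrangement of the conjugate data forced by the row lengths. -/
/-- A reverse semi-standard Young tableau (French style): rows indexed from 1 (bottom
row first), `rowLen j` cells in row `j` at positions `0, 1, …`, row lengths weakly
decreasing upwards, rows strictly decreasing left to right, columns weakly decreasing
bottom to top; entries are positive, and `0` outside the diagram. -/
structure RSSYT where
  rowLen : ℕ → ℕ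
  entry : ℕ → ℕ → ℕ
  rowLen_zero : rowLen 0 = 0
  support : ∃ N, ∀ j, N ≤ j → rowLen j = 0
  rowLen_decr : ∀ j, 1 ≤ j → rowLen (j + 1) ≤ rowLen j
  pos : ∀ j k, 1 ≤ j → k < rowLen j → 1 ≤ entry j k
  zero_outside : ∀ j k, rowLen j ≤ k → entry j k = 0
  row_strict : ∀ j k, k + 1 < rowLen j → entry j (k + 1) < entry j k
  col_weak : ∀ j k, 1 ≤ j → k < rowLen (j + 1) → entry (j + 1) k ≤ entry j k


namespace SSAF

variable (F : SSAF)

/-- occupancy: for j ≥ 1, cell occupied iff entry positive -/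
lemma occ_iff {i j : ℕ} (hj : 1 ≤ j) : j ≤ F.shape i ↔ 1 ≤ F.entry i j := by
  constructor
  · exact fun h => F.pos i j hj h
  · intro h
    by_contra hc
    have := F.zero_outside i j (by omega)
    omega

/-- rows of an SSAF have distinct entries -/
lemma row_distinct {i1 i2 j : ℕ} (h12 : i1 < i2) (hj : 1 ≤ j)
    (h1 : j ≤ F.shape i1) (h2 : j ≤ F.shape i2) : F.entry i1 j ≠ F.entry i2 j := by
  intro he
  rcases le_or_gt (F.shape i2) (F.shape i1) with hs | hs
  · have := F.typeA i1 i2 j h12 hs hj h2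
    simp only [ind, he] at this
    split_ifs at this <;> omega
  · have := F.typeB i1 i2 j h12 hs h1 (by omega)
    simp only [ind, he] at this
    split_ifs at this <;> omega

/-- Lemma B': strictly taller column to the right dominates shifted -/
lemma taller_right {i1 i2 : ℕ} (h12 : i1 < i2) (hs : F.shape i1 < F.shape i2) :
    ∀ j, j ≤ F.shape i1 → F.entry i1 j < F.entry i2 (j + 1) := by
  intro j
  induction j with
  | zero =>
    intro _
    have := F.typeB i1 i2 0 h12 hs (by omega) (by omega)
    simp only [ind, F.basement] at this
    have hb1 := F.basement i1
    split_ifs at this <;> omega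
  | succ j ih =>
    intro hj
    have hj' : j ≤ F.shape i1 := by omega
    have h1 := ih hj'
    have h2 : F.entry i1 (j+1) ≤ F.entry i1 j := F.noDescent i1 j (by omega)
    have h3 : F.entry i2 (j+2) ≤ F.entry i2 (j+1) := F.noDescent i2 (j+1) (by omega)
    have := F.typeB i1 i2 (j+1) h12 hs hj (by omega)
    simp only [ind] at this
    split_ifs at this <;> omega

/-- Greedy property (G): in any SSAF, if `b` sits at `(i2, j+1)` and a column `i1 < i2`
has row-`j` entry ≥ b, then `(i1, j+1)` is occupied with a strictly larger entry. -/
lemma greedy {i1 i2 j : ℕ} (h12 : i1 < i2) (h1 : j ≤ F.shape i1) (h2 : j + 1 ≤ F.shape i2)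
    (hle : F.entry i2 (j + 1) ≤ F.entry i1 j) :
    j + 1 ≤ F.shape i1 ∧ F.entry i2 (j + 1) < F.entry i1 (j + 1) := by
  rcases lt_or_ge (F.shape i1) (F.shape i2) with hs | hs
  · exact absurd hle (by simpa using (F.taller_right h12 hs j h1).not_ge)
  · have hsh : j + 1 ≤ F.shape i1 := le_trans h2 hs
    refine ⟨hsh, ?_⟩
    have := F.typeA i1 i2 (j+1) h12 hs (by omega) h2
    have hjj : j + 1 - 1 = j := by omega
    rw [hjj] at this
    have hnd : F.entry i1 (j+1) ≤ F.entry i1 j := F.noDescent i1 j hsh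
    simp only [ind] at this
    split_ifs at this <;> omega

/-- entries weakly decrease up a column -/
lemma col_mono {i : ℕ} : ∀ {j1 j2 : ℕ}, j1 ≤ j2 → j2 ≤ F.shape i →
    F.entry i j2 ≤ F.entry i j1 := by
  intro j1 j2
  induction j2 with
  | zero =>
    intro h _
    cases Nat.le_zero.mp h
    exact le_refl _
  | succ j ih =>
    intro h hsh
    rcases Nat.eq_or_lt_of_le h with rfl | hlt
    · exact le_refl _
    · exact le_trans (F.noDescent i j hsh) (ih (by omega) (by omega))

end SSAF

section Master

variable (shape : ℕ → ℕ) (entry : ℕ → ℕ → ℕ)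

lemma mk_typeA
    (noDescent : ∀ i j, j + 1 ≤ shape i → entry i (j + 1) ≤ entry i j)
    (distinct : ∀ i1 i2 j, i1 < i2 → 1 ≤ j → j ≤ shape i1 → j ≤ shape i2 →
      entry i1 j ≠ entry i2 j)
    (greedy : ∀ i1 i2 j, i1 < i2 → j ≤ shape i1 → j + 1 ≤ shape i2 →
      entry i2 (j + 1) ≤ entry i1 j → j + 1 ≤ shape i1 ∧ entry i2 (j + 1) < entry i1 (j + 1)) :
    ∀ i1 i2 j, i1 < i2 → shape i2 ≤ shape i1 → 1 ≤ j → j ≤ shape i2 →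
    ind (entry i1 j) (entry i2 j) + ind (entry i2 j) (entry i1 (j - 1))
      - ind (entry i1 j) (entry i1 (j - 1)) = 1 := by
  intro i1 i2 j h12 hs hj hj2
  obtain ⟨j', rfl⟩ : ∃ j', j = j' + 1 := ⟨j - 1, by omega⟩
  simp only [Nat.add_sub_cancel]
  have hsh1 : j' + 1 ≤ shape i1 := le_trans hj2 hs
  have hnd : entry i1 (j' + 1) ≤ entry i1 j' := noDescent i1 j' hsh1
  have hne : entry i1 (j' + 1) ≠ entry i2 (j' + 1) :=
    distinct i1 i2 (j' + 1) h12 (by omega) hsh1 hj2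
  rcases le_or_gt (entry i2 (j' + 1)) (entry i1 j') with hle | hlt
  · have := (greedy i1 i2 j' h12 (by omega) hj2 hle).2
    simp only [ind]; split_ifs <;> omega
  · simp only [ind]; split_ifs <;> omega

lemma mk_typeB
    (occ : ∀ i j, 1 ≤ j → (j ≤ shape i ↔ 1 ≤ entry i j))
    (noDescent : ∀ i j, j + 1 ≤ shape i → entry i (j + 1) ≤ entry i j)
    (greedy : ∀ i1 i2 j, i1 < i2 → j ≤ shape i1 → j + 1 ≤ shape i2 →
      entry i2 (j + 1) ≤ entry i1 j → j + 1 ≤ shape i1 ∧ entry i2 (j + 1) < entry i1 (j + 1)) :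
    ∀ i1 i2 j, i1 < i2 → shape i1 < shape i2 → j ≤ shape i1 → j + 1 ≤ shape i2 →
    ind (entry i2 (j + 1)) (entry i1 j) + ind (entry i1 j) (entry i2 j)
      - ind (entry i2 (j + 1)) (entry i2 j) = 1 := by
  intro i1 i2 j h12 hs hj1 hj2
  have hnd : entry i2 (j + 1) ≤ entry i2 j := noDescent i2 j hj2
  have hab : entry i1 j < entry i2 (j + 1) := by
    by_contra hc
    push_neg at hc
    have iter : ∀ m, 1 ≤ m → j + m ≤ shape i2 →
        j + m ≤ shape i1 ∧ entry i2 (j + m) < entry i1 (j + m) := by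
      intro m
      induction m with
      | zero => omega
      | succ m ih =>
        intro _ hm2
        rcases Nat.eq_zero_or_pos m with rfl | hm
        · exact greedy i1 i2 j h12 hj1 (by omega) hc
        · obtain ⟨ih1, ih2⟩ := ih hm (by omega)
          have : entry i2 (j + m + 1) ≤ entry i1 (j + m) :=
            le_trans (noDescent i2 (j + m) (by omega)) (le_of_lt ih2)
          have := greedy i1 i2 (j + m) h12 ih1 (by omega) this
          constructor
          · omega
          · have h := this.2
            convert h using 2 <;> omega
    have := (iter (shape i2 - j) (by omega) (by omega)).1
    omega
  simp only [ind]; split_ifs <;> omega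

end Master

section SortLemmas

lemma getD_le_getD_of_sorted (l : List ℕ) (hl : List.Pairwise (· ≥ ·) l) {k m : ℕ}
    (hkm : k ≤ m) (hm : m < l.length) : l.getD m 0 ≤ l.getD k 0 := by
  have hk : k < l.length := lt_of_le_of_lt hkm hm
  rw [List.getD_eq_getElem l 0 hm, List.getD_eq_getElem l 0 hk]
  rcases eq_or_lt_of_le hkm with rfl | h
  · exact le_refl _
  · exact List.pairwise_iff_getElem.mp hl k m hk hm h

lemma getD_lt_getD_of_sorted_nodup (l : List ℕ) (hl : List.Pairwise (· ≥ ·) l)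
    (hnd : l.Nodup) {k : ℕ} (hk : k + 1 < l.length) :
    l.getD (k + 1) 0 < l.getD k 0 := by
  have hle := getD_le_getD_of_sorted l hl (show k ≤ k + 1 by omega) hk
  have hne : l.getD (k+1) 0 ≠ l.getD k 0 := by
    rw [List.getD_eq_getElem l 0 hk, List.getD_eq_getElem l 0 (by omega)]
    intro h
    have := (List.Nodup.getElem_inj_iff hnd).mp h
    omega
  omega

/-- the `k`-th largest element of `s` (0-indexed), or 0 -/
noncomputable def nthDesc (s : Finset ℕ) (k : ℕ) : ℕ := (s.sort (· ≥ ·)).getD k 0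

lemma nthDesc_mem (s : Finset ℕ) {k : ℕ} (hk : k < s.card) : nthDesc s k ∈ s := by
  have hk' : k < (s.sort (· ≥ ·)).length := by rwa [Finset.length_sort]
  rw [nthDesc, List.getD_eq_getElem _ 0 hk']
  exact (Finset.mem_sort _).mp (List.getElem_mem _)

lemma nthDesc_eq_zero (s : Finset ℕ) {k : ℕ} (hk : s.card ≤ k) : nthDesc s k = 0 := by
  apply List.getD_eq_default
  rwa [Finset.length_sort]

lemma nthDesc_strict (s : Finset ℕ) {k : ℕ} (hk : k + 1 < s.card) :
    nthDesc s (k + 1) < nthDesc s k :=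
  getD_lt_getD_of_sorted_nodup _ (Finset.pairwise_sort _ _) (Finset.sort_nodup _ _)
    (by rwa [Finset.length_sort])

lemma card_filter_nthDesc_le (s : Finset ℕ) {k : ℕ} (hk : k < s.card) :
    k + 1 ≤ (s.filter (fun x => nthDesc s k ≤ x)).card := by
  set l := s.sort (· ≥ ·) with hl
  have hlen : l.length = s.card := Finset.length_sort _
  have hsub : (Finset.range (k+1)).image (fun m => l.getD m 0) ⊆
      s.filter (fun x => nthDesc s k ≤ x) := by
    intro x hx
    simp only [Finset.mem_image, Finset.mem_range] at hx
    obtain ⟨m, hm, rfl⟩ := hx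
    have hmlen : m < l.length := by omega
    rw [Finset.mem_filter]
    constructor
    · rw [List.getD_eq_getElem _ 0 hmlen]
      exact (Finset.mem_sort _).mp (List.getElem_mem _)
    · exact getD_le_getD_of_sorted l (Finset.pairwise_sort _ _) (by omega) (by omega)
  have hcard : ((Finset.range (k+1)).image (fun m => l.getD m 0)).card = k + 1 := by
    rw [Finset.card_image_of_injOn, Finset.card_range]
    intro m1 hm1 m2 hm2 he
    simp only [Finset.mem_coe, Finset.mem_range] at hm1 hm2
    have h1 : m1 < l.length := by omega
    have h2 : m2 < l.length := by omega
    have he' : l.getD m1 0 = l.getD m2 0 := he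
    rw [List.getD_eq_getElem _ 0 h1, List.getD_eq_getElem _ 0 h2] at he'
    exact (List.Nodup.getElem_inj_iff (Finset.sort_nodup _ _)).mp he'
  calc k + 1 = _ := hcard.symm
    _ ≤ _ := Finset.card_le_card hsub

lemma le_nthDesc_of_card_filter (t : Finset ℕ) (v : ℕ) {k : ℕ}
    (h : k + 1 ≤ (t.filter (fun x => v ≤ x)).card) :
    k < t.card ∧ v ≤ nthDesc t k := by
  have hkt : k < t.card := by
    have := Finset.card_le_card (Finset.filter_subset (fun x => v ≤ x) t)
    omega
  refine ⟨hkt, ?_⟩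
  by_contra hc
  push_neg at hc
  set l := t.sort (· ≥ ·) with hl
  have hlen : l.length = t.card := Finset.length_sort _
  have hsub : t.filter (fun x => v ≤ x) ⊆ (Finset.range k).image (fun m => l.getD m 0) := by
    intro x hx
    rw [Finset.mem_filter] at hx
    obtain ⟨hxt, hvx⟩ := hx
    have hxl : x ∈ l := (Finset.mem_sort _).mpr hxt
    obtain ⟨m, hm, hget⟩ := List.getElem_of_mem hxl
    simp only [Finset.mem_image, Finset.mem_range]
    refine ⟨m, ?_, by rw [List.getD_eq_getElem _ 0 hm]; exact hget⟩
    by_contra hmk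
    push_neg at hmk
    have : l.getD m 0 ≤ l.getD k 0 :=
      getD_le_getD_of_sorted l (Finset.pairwise_sort _ _) hmk hm
    rw [List.getD_eq_getElem _ 0 hm] at this
    rw [hget] at this
    have : x < v := lt_of_le_of_lt this hc
    omega
  have := Finset.card_le_card hsub
  have h2 := Finset.card_image_le (s := Finset.range k) (f := fun m => l.getD m 0)
  rw [Finset.card_range] at h2
  omega

end SortLemmas

namespace SSAF

lemma col_finite (F : SSAF) (j : ℕ) (hj : 1 ≤ j) : {i | j ≤ F.shape i}.Finite := by
  obtain ⟨N, hN⟩ := F.support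
  apply Set.Finite.subset (Set.finite_Iio N)
  intro i hi
  simp only [Set.mem_setOf_eq] at hi
  simp only [Set.mem_Iio]
  by_contra hc
  have := hN i (by omega)
  omega

noncomputable def colFinset (F : SSAF) (j : ℕ) : Finset ℕ :=
  if hj : 1 ≤ j then (F.col_finite j hj).toFinset else ∅

lemma mem_colFinset {F : SSAF} {i j : ℕ} : i ∈ F.colFinset j ↔ 1 ≤ j ∧ j ≤ F.shape i := by
  unfold colFinset
  split_ifs with hj
  · simp [Set.Finite.mem_toFinset, hj]
  · simp; omega

noncomputable def rowFinset (F : SSAF) (j : ℕ) : Finset ℕ :=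
  (F.colFinset j).image (fun i => F.entry i j)

lemma entry_injOn (F : SSAF) (j : ℕ) :
    Set.InjOn (fun i => F.entry i j) (F.colFinset j) := by
  intro i1 h1 i2 h2 he
  simp only [Finset.mem_coe, mem_colFinset] at h1 h2
  by_contra hne
  rcases lt_or_gt_of_ne hne with h | h
  · exact F.row_distinct h h1.1 h1.2 h2.2 he
  · exact F.row_distinct h h1.1 h2.2 h1.2 he.symm

lemma card_rowFinset (F : SSAF) (j : ℕ) : (F.rowFinset j).card = (F.colFinset j).card :=
  Finset.card_image_of_injOn (F.entry_injOn j)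

lemma mem_rowFinset {F : SSAF} {j v : ℕ} :
    v ∈ F.rowFinset j ↔ ∃ i, (1 ≤ j ∧ j ≤ F.shape i) ∧ F.entry i j = v := by
  simp [rowFinset, mem_colFinset]

/-- the sorting map ρ -/
noncomputable def rho (F : SSAF) : RSSYT where
  rowLen j := (F.colFinset j).card
  entry j k := nthDesc (F.rowFinset j) k
  rowLen_zero := by
    simp [colFinset]
  support := by
    obtain ⟨N, hN⟩ := F.support
    refine ⟨(Finset.range N).sup F.shape + 1, fun j hj => ?_⟩
    rw [Finset.card_eq_zero]
    ext i
    simp only [mem_colFinset, Finset.notMem_empty, iff_false, not_and]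
    intro h1
    rcases lt_or_ge i N with hi | hi
    · have : F.shape i ≤ (Finset.range N).sup F.shape :=
        Finset.le_sup (Finset.mem_range.mpr hi)
      omega
    · have := hN i hi; omega
  rowLen_decr := by
    intro j hj
    apply Finset.card_le_card
    intro i hi
    rw [mem_colFinset] at hi ⊢
    omega
  pos := by
    intro j k hj hk
    show 1 ≤ nthDesc (F.rowFinset j) k
    have hk : k < (F.rowFinset j).card := by rw [card_rowFinset]; exact hk
    have := nthDesc_mem (F.rowFinset j) hk
    rw [mem_rowFinset] at this
    obtain ⟨i, ⟨hj1, hji⟩, he⟩ := this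
    have := F.pos i j hj1 hji
    omega
  zero_outside := by
    intro j k hk
    apply nthDesc_eq_zero
    rw [card_rowFinset]
    exact hk
  row_strict := by
    intro j k hk
    show nthDesc (F.rowFinset j) (k+1) < nthDesc (F.rowFinset j) k
    have hk : k + 1 < (F.rowFinset j).card := by rw [card_rowFinset]; exact hk
    exact nthDesc_strict _ hk
  col_weak := by
    intro j k hj hk
    show nthDesc (F.rowFinset (j+1)) k ≤ nthDesc (F.rowFinset j) k
    have hk : k < (F.rowFinset (j+1)).card := by rw [card_rowFinset]; exact hk
    set v := nthDesc (F.rowFinset (j+1)) k with hv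
    have h1 : k + 1 ≤ ((F.rowFinset (j+1)).filter (fun x => v ≤ x)).card :=
      card_filter_nthDesc_le _ hk
    -- transfer the count to row j
    have h2 : ((F.rowFinset (j+1)).filter (fun x => v ≤ x)).card ≤
        ((F.rowFinset j).filter (fun x => v ≤ x)).card := by
      have himg : (F.rowFinset (j+1)).filter (fun x => v ≤ x) =
          ((F.colFinset (j+1)).filter (fun i => v ≤ F.entry i (j+1))).image
            (fun i => F.entry i (j+1)) := by
        rw [rowFinset, Finset.filter_image]
      rw [himg]
      have hinj : Set.InjOn (fun i => F.entry i j)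
          ((F.colFinset (j+1)).filter (fun i => v ≤ F.entry i (j+1))) := by
        apply Set.InjOn.mono _ (F.entry_injOn j)
        intro i hi
        simp only [Finset.coe_filter, Set.mem_setOf_eq, mem_colFinset, Finset.mem_coe] at hi ⊢
        omega
      calc (((F.colFinset (j+1)).filter (fun i => v ≤ F.entry i (j+1))).image
            (fun i => F.entry i (j+1))).card
          ≤ ((F.colFinset (j+1)).filter (fun i => v ≤ F.entry i (j+1))).card :=
            Finset.card_image_le
        _ = (((F.colFinset (j+1)).filter (fun i => v ≤ F.entry i (j+1))).image
            (fun i => F.entry i j)).card := (Finset.card_image_of_injOn hinj).symm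
        _ ≤ _ := by
            apply Finset.card_le_card
            intro x hx
            simp only [Finset.mem_image, Finset.mem_filter, mem_colFinset] at hx
            obtain ⟨i, ⟨⟨hj1, hsh⟩, hvi⟩, rfl⟩ := hx
            have hnd : F.entry i (j+1) ≤ F.entry i j := F.noDescent i j hsh
            rw [Finset.mem_filter, mem_rowFinset]
            exact ⟨⟨i, ⟨by omega, by omega⟩, rfl⟩, by omega⟩
    exact (le_nthDesc_of_card_filter _ v (le_trans h1 h2)).2

end SSAF

lemma mem_iff_nthDesc (s : Finset ℕ) (v : ℕ) :
    v ∈ s ↔ ∃ k, k < s.card ∧ nthDesc s k = v := by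
  constructor
  · intro hv
    have : v ∈ s.sort (· ≥ ·) := (Finset.mem_sort _).mpr hv
    obtain ⟨m, hm, hget⟩ := List.getElem_of_mem this
    exact ⟨m, by rwa [Finset.length_sort] at hm,
      by rw [nthDesc, List.getD_eq_getElem _ 0 hm]; exact hget⟩
  · rintro ⟨k, hk, rfl⟩
    exact nthDesc_mem s hk

namespace SSAF

lemma ext' {F F' : SSAF} (h1 : F.shape = F'.shape) (h2 : F.entry = F'.entry) : F = F' := by
  cases F; cases F'; cases h1; cases h2; rfl

lemma entry_ext (F F' : SSAF) (hrow : ∀ j, 1 ≤ j → F.rowFinset j = F'.rowFinset j) :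
    F = F' := by
  have hent : ∀ j i, F.entry i j = F'.entry i j := by
    intro j
    induction j with
    | zero => intro i; rw [F.basement, F'.basement]
    | succ j IH =>
      -- occupancy transfer at row j
      have hocc : ∀ i, j ≤ F.shape i ↔ j ≤ F'.shape i := by
        intro i
        rcases Nat.eq_zero_or_pos j with rfl | hj
        · simp
        · rw [F.occ_iff hj, F'.occ_iff hj, IH i]
      set R := F.rowFinset (j+1) with hR
      have hR' : F'.rowFinset (j+1) = R := (hrow (j+1) (by omega)).symm
      set M := R.sup id with hM
      have hbound : ∀ i, 1 ≤ F.entry i (j+1) → F.entry i (j+1) ≤ M := by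
        intro i h1
        apply Finset.le_sup (f := id)
        rw [hR, mem_rowFinset]
        exact ⟨i, ⟨by omega, (F.occ_iff (by omega)).mpr h1⟩, rfl⟩
      have hbound' : ∀ i, 1 ≤ F'.entry i (j+1) → F'.entry i (j+1) ≤ M := by
        intro i h1
        apply Finset.le_sup (f := id)
        rw [← hR', mem_rowFinset]
        exact ⟨i, ⟨by omega, (F'.occ_iff (by omega)).mpr h1⟩, rfl⟩
      -- downward induction
      have key : ∀ t, ∀ i,
          (M + 1 - t ≤ F.entry i (j+1) → 1 ≤ F.entry i (j+1) →
            F.entry i (j+1) = F'.entry i (j+1)) ∧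
          (M + 1 - t ≤ F'.entry i (j+1) → 1 ≤ F'.entry i (j+1) →
            F.entry i (j+1) = F'.entry i (j+1)) := by
        intro t
        induction t with
        | zero =>
          intro i
          constructor
          · intro hge h1; have := hbound i h1; omega
          · intro hge h1; have := hbound' i h1; omega
        | succ t IHt =>
          intro i2
          rcases le_or_gt (M + 1 - t) (M + 1 - (t+1)) with hsame | hlt
          · -- no new value: same as IH
            constructor
            · intro hge h1; exact (IHt i2).1 (by omega) h1
            · intro hge h1; exact (IHt i2).2 (by omega) h1
          · have hv : M + 1 - (t+1) = M - t := by omega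
            set v := M - t with hvdef
            rw [hv]
            have hstep1 : ∀ i, v + 1 ≤ F.entry i (j+1) → 1 ≤ F.entry i (j+1) →
                F.entry i (j+1) = F'.entry i (j+1) := by
              intro i h h1; exact (IHt i).1 (by omega) h1
            have hstep2 : ∀ i, v + 1 ≤ F'.entry i (j+1) → 1 ≤ F'.entry i (j+1) →
                F.entry i (j+1) = F'.entry i (j+1) := by
              intro i h h1; exact (IHt i).2 (by omega) h1
            constructor
            · intro hge h1
              rcases lt_or_ge v (F.entry i2 (j+1)) with hgt | hle
              · exact hstep1 i2 (by omega) h1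
              · -- F.entry i2 (j+1) = v exactly
                have hveq : F.entry i2 (j+1) = v := by omega
                have hocc2 : j + 1 ≤ F.shape i2 := (F.occ_iff (by omega)).mpr h1
                have hmem : v ∈ R := by
                  rw [hR, mem_rowFinset]; exact ⟨i2, ⟨by omega, hocc2⟩, hveq⟩
                rw [← hR', mem_rowFinset] at hmem
                obtain ⟨i2', ⟨-, hocc2'⟩, he'⟩ := hmem
                rcases lt_trichotomy i2' i2 with hlt' | heq | hgt'
                · -- use greedy in F
                  exfalso
                  have hj2' : j ≤ F.shape i2' := (hocc i2').mpr (by omega)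
                  have hnd' : v ≤ F'.entry i2' j := by
                    rw [← he']; exact F'.noDescent i2' j hocc2'
                  have hle2 : F.entry i2 (j+1) ≤ F.entry i2' j := by
                    rw [hveq, IH i2']; exact hnd'
                  obtain ⟨ho, hgt2⟩ := F.greedy hlt' hj2' hocc2 hle2
                  have h1' : 1 ≤ F.entry i2' (j+1) := by omega
                  have := hstep1 i2' (by omega) h1'
                  rw [this, he'] at hgt2
                  omega
                · rw [hveq, ← he', heq]
                · -- use greedy in F'
                  exfalso
                  have hj2 : j ≤ F'.shape i2 := by
                    apply (hocc i2).mp; omega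
                  have hle2 : F'.entry i2' (j+1) ≤ F'.entry i2 j := by
                    rw [he', ← IH i2]
                    calc v = F.entry i2 (j+1) := hveq.symm
                      _ ≤ F.entry i2 j := F.noDescent i2 j hocc2
                  obtain ⟨ho, hgt2⟩ := F'.greedy hgt' hj2 hocc2' hle2
                  have h1' : 1 ≤ F'.entry i2 (j+1) := by omega
                  have heq2 := hstep2 i2 (by omega) h1'
                  rw [← heq2, hveq] at hgt2
                  rw [he'] at hgt2
                  omega
            · intro hge h1
              rcases lt_or_ge v (F'.entry i2 (j+1)) with hgt | hle
              · exact hstep2 i2 (by omega) h1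
              · have hveq : F'.entry i2 (j+1) = v := by omega
                have hocc2 : j + 1 ≤ F'.shape i2 := (F'.occ_iff (by omega)).mpr h1
                have hmem : v ∈ R := by
                  rw [← hR', mem_rowFinset]; exact ⟨i2, ⟨by omega, hocc2⟩, hveq⟩
                rw [hR, mem_rowFinset] at hmem
                obtain ⟨i2', ⟨-, hocc2'⟩, he'⟩ := hmem
                rcases lt_trichotomy i2' i2 with hlt' | heq | hgt'
                · exfalso
                  have hj2' : j ≤ F'.shape i2' := (hocc i2').mp (by omega)
                  have hnd' : v ≤ F.entry i2' j := by
                    rw [← he']; exact F.noDescent i2' j hocc2'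
                  have hle2 : F'.entry i2 (j+1) ≤ F'.entry i2' j := by
                    rw [hveq, ← IH i2']; exact hnd'
                  obtain ⟨ho, hgt2⟩ := F'.greedy hlt' hj2' hocc2 hle2
                  have h1' : 1 ≤ F'.entry i2' (j+1) := by omega
                  have := hstep2 i2' (by omega) h1'
                  rw [← this, he'] at hgt2
                  omega
                · rw [hveq, ← he', heq]
                · exfalso
                  have hj2 : j ≤ F.shape i2 := by
                    apply (hocc i2).mpr; omega
                  have hle2 : F.entry i2' (j+1) ≤ F.entry i2 j := by
                    rw [he', IH i2]
                    calc v = F'.entry i2 (j+1) := hveq.symm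
                      _ ≤ F'.entry i2 j := F'.noDescent i2 j hocc2
                  obtain ⟨ho, hgt2⟩ := F.greedy hgt' hj2 hocc2' hle2
                  have h1' : 1 ≤ F.entry i2 (j+1) := by omega
                  have heq2 := hstep1 i2 (by omega) h1'
                  rw [heq2, hveq] at hgt2
                  rw [he'] at hgt2
                  omega
      intro i
      have hP1 := key (M + 1) i
      simp only [Nat.sub_self] at hP1
      have hP1' : ∀ i', (1 ≤ F.entry i' (j+1) → F.entry i' (j+1) = F'.entry i' (j+1)) ∧
          (1 ≤ F'.entry i' (j+1) → F.entry i' (j+1) = F'.entry i' (j+1)) := by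
        intro i'
        have h := key (M + 1) i'
        constructor
        · intro h1; exact h.1 (by omega) h1
        · intro h1; exact h.2 (by omega) h1
      rcases Nat.eq_zero_or_pos (F.entry i (j+1)) with h0 | h1
      · rcases Nat.eq_zero_or_pos (F'.entry i (j+1)) with h0' | h1'
        · omega
        · have := (hP1' i).2 h1'; omega
      · exact (hP1' i).1 h1
  apply ext'
  · funext i
    by_contra hne
    rcases Nat.lt_or_ge (F.shape i) (F'.shape i) with h | h
    · set j := F'.shape i with hj
      have hj1 : 1 ≤ j := by omega
      have h1 : 1 ≤ F'.entry i j := F'.pos i j hj1 (le_refl _)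
      have h0 : F.entry i j = 0 := F.zero_outside i j (by omega)
      have := hent j i
      omega
    · rcases Nat.lt_or_ge (F'.shape i) (F.shape i) with h2 | h2
      · set j := F.shape i with hj
        have hj1 : 1 ≤ j := by omega
        have h1 : 1 ≤ F.entry i j := F.pos i j hj1 (le_refl _)
        have h0 : F'.entry i j = 0 := F'.zero_outside i j (by omega)
        have := hent j i
        omega
      · omega
  · funext i j
    exact hent j i

lemma rho_injective : Function.Injective rho := by
  intro F F' h
  apply entry_ext
  intro j hj
  have hlen : (F.colFinset j).card = (F'.colFinset j).card := by
    have := congrArg RSSYT.rowLen h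
    exact congrFun this j
  have hentry : ∀ k, nthDesc (F.rowFinset j) k = nthDesc (F'.rowFinset j) k := by
    intro k
    have := congrArg RSSYT.entry h
    exact congrFun (congrFun this j) k
  have hcard : (F.rowFinset j).card = (F'.rowFinset j).card := by
    rw [card_rowFinset, card_rowFinset, hlen]
  ext v
  rw [mem_iff_nthDesc, mem_iff_nthDesc, hcard]
  constructor
  · rintro ⟨k, hk, rfl⟩; exact ⟨k, hk, (hentry k).symm⟩
  · rintro ⟨k, hk, rfl⟩; exact ⟨k, hk, hentry k⟩

end SSAF
section Greedy

/-- list of positions already used by the first `k` values -/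
noncomputable def posList (vals prev : ℕ → ℕ) : ℕ → List ℕ
  | 0 => []
  | k+1 => posList vals prev k ++ [sInf {i | vals k ≤ prev i ∧ i ∉ posList vals prev k}]

/-- position of the `k`-th (largest-first) value of the new row: leftmost column whose
previous-row entry is at least `vals k` and which is not already used. -/
noncomputable def posRow (vals prev : ℕ → ℕ) (k : ℕ) : ℕ :=
  sInf {i | vals k ≤ prev i ∧ i ∉ posList vals prev k}

lemma mem_posList {vals prev : ℕ → ℕ} {k i : ℕ} :
    i ∈ posList vals prev k ↔ ∃ k', k' < k ∧ posRow vals prev k' = i := by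
  induction k with
  | zero => simp [posList]
  | succ k ih =>
    simp only [posList, List.mem_append, List.mem_singleton, ih]
    constructor
    · rintro (⟨k', h1, h2⟩ | h)
      · exact ⟨k', by omega, h2⟩
      · exact ⟨k, by omega, h.symm⟩
    · rintro ⟨k', h1, h2⟩
      rcases Nat.lt_or_ge k' k with h | h
      · exact Or.inl ⟨k', h, h2⟩
      · have : k' = k := by omega
        subst this
        exact Or.inr h2.symm

lemma posRow_def (vals prev : ℕ → ℕ) (k : ℕ) :
    posRow vals prev k
      = sInf {i | vals k ≤ prev i ∧ ∀ k', k' < k → posRow vals prev k' ≠ i} := by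
  rw [posRow]
  congr 1
  ext i
  simp only [Set.mem_setOf_eq, mem_posList]
  constructor
  · rintro ⟨h1, h2⟩
    exact ⟨h1, fun k' hk' he => h2 ⟨k', hk', he⟩⟩
  · rintro ⟨h1, h2⟩
    exact ⟨h1, fun ⟨k', hk', he⟩ => h2 k' hk' he⟩

open Classical in
/-- the new row as a function of columns -/
noncomputable def nextRow (vals : ℕ → ℕ) (len : ℕ) (prev : ℕ → ℕ) (i : ℕ) : ℕ :=
  if h : ∃ k, k < len ∧ posRow vals prev k = i then vals h.choose else 0

variable {vals prev : ℕ → ℕ} {len : ℕ}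

/-- availability hypothesis: for each `k < len` there are at least `k+1` columns whose
previous entry is at least `vals k`. -/
def Avail (vals prev : ℕ → ℕ) (len : ℕ) : Prop :=
  ∀ k, k < len → ∃ S : Finset ℕ, k + 1 ≤ S.card ∧ ∀ i ∈ S, vals k ≤ prev i

lemma posRow_mem (hav : Avail vals prev len) {k : ℕ} (hk : k < len) :
    vals k ≤ prev (posRow vals prev k) ∧
      ∀ k', k' < k → posRow vals prev k' ≠ posRow vals prev k := by
  obtain ⟨S, hcard, hS⟩ := hav k hk
  have hne : {i | vals k ≤ prev i ∧ ∀ k', k' < k → posRow vals prev k' ≠ i}.Nonempty := by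
    have hsub : ¬ (S ⊆ (Finset.range k).image (posRow vals prev)) := by
      intro hsub
      have := Finset.card_le_card hsub
      have h2 := Finset.card_image_le (s := Finset.range k) (f := posRow vals prev)
      rw [Finset.card_range] at h2
      omega
    obtain ⟨i, hiS, hiP⟩ := Finset.not_subset.mp hsub
    refine ⟨i, hS i hiS, fun k' hk' he => hiP ?_⟩
    simp only [Finset.mem_image, Finset.mem_range]
    exact ⟨k', hk', he⟩
  have := Nat.sInf_mem hne
  rw [← posRow_def] at this
  exact this

lemma posRow_min {k i : ℕ} (hi : i < posRow vals prev k) (hvi : vals k ≤ prev i) :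
    ∃ k', k' < k ∧ posRow vals prev k' = i := by
  rw [posRow_def] at hi
  have := Nat.notMem_of_lt_sInf hi
  simp only [Set.mem_setOf_eq, not_and, not_forall] at this
  obtain ⟨k', hk', he⟩ := this hvi
  exact ⟨k', hk', by tauto⟩

lemma posRow_inj (hav : Avail vals prev len) {k1 k2 : ℕ} (h1 : k1 < len) (h2 : k2 < len)
    (he : posRow vals prev k1 = posRow vals prev k2) : k1 = k2 := by
  rcases lt_trichotomy k1 k2 with h | h | h
  · exact absurd he ((posRow_mem hav h2).2 k1 h)
  · exact h
  · exact absurd he.symm ((posRow_mem hav h1).2 k2 h)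

lemma nextRow_posRow (hav : Avail vals prev len) {k : ℕ} (hk : k < len) :
    nextRow vals len prev (posRow vals prev k) = vals k := by
  have hex : ∃ k', k' < len ∧ posRow vals prev k' = posRow vals prev k := ⟨k, hk, rfl⟩
  rw [nextRow, dif_pos hex]
  have hc := hex.choose_spec
  rw [posRow_inj hav hc.1 hk hc.2]

lemma nextRow_eq_zero {i : ℕ} (h : ¬ ∃ k, k < len ∧ posRow vals prev k = i) :
    nextRow vals len prev i = 0 := by
  rw [nextRow, dif_neg h]

lemma nextRow_ne_zero {i : ℕ} (hne : nextRow vals len prev i ≠ 0) :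
    ∃ k, k < len ∧ posRow vals prev k = i := by
  by_contra h
  exact hne (nextRow_eq_zero h)

end Greedy

lemma nthDesc_image_strictAnti (f : ℕ → ℕ) (n : ℕ)
    (hf : ∀ k1 k2, k1 < k2 → k2 < n → f k2 < f k1) {k : ℕ} (hk : k < n) :
    nthDesc ((Finset.range n).image f) k = f k := by
  set l := (List.range n).map f with hl
  have hpw : l.Pairwise (· > ·) := by
    rw [hl]
    apply List.Pairwise.map
    · intro a b hab
      exact hab
    · rw [List.pairwise_iff_getElem]
      intro m1 m2 h1 h2 h12
      simp only [List.length_range] at h1 h2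
      simp only [List.getElem_range]
      exact hf m1 m2 h12 h2
  have hnd : l.Nodup := hpw.imp (fun h => ne_of_gt h)
  have hsorted : l.Pairwise (· ≥ ·) := hpw.imp (fun h => le_of_lt h)
  have htf : l.toFinset = (Finset.range n).image f := by
    ext x
    simp [hl, List.mem_map, List.mem_range]
  have hsort : ((Finset.range n).image f).sort (· ≥ ·) = l := by
    rw [← htf]
    exact (List.toFinset_sort _ hnd).mpr hsorted
  rw [nthDesc, hsort]
  have hklen : k < l.length := by simpa [hl] using hk
  rw [List.getD_eq_getElem _ 0 hklen]
  simp [hl]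

namespace RSSYT

variable (T : RSSYT)

lemma row_strictAnti {j k1 k2 : ℕ} (h : k1 < k2) (h2 : k2 < T.rowLen j) :
    T.entry j k2 < T.entry j k1 := by
  induction k2 with
  | zero => omega
  | succ k2 ih =>
    rcases Nat.lt_or_ge k1 k2 with h' | h'
    · exact lt_trans (T.row_strict j k2 h2) (ih h' (by omega))
    · have : k1 = k2 := by omega
      subst this
      exact T.row_strict j k1 h2

/-- the rows of the inverse (greedy insertion) filling -/
noncomputable def rows : ℕ → ℕ → ℕ
  | 0 => fun i => i
  | j+1 => nextRow (T.entry (j+1)) (T.rowLen (j+1)) (rows j)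

/-- positions used for row `j+1` -/
noncomputable def pRow (j : ℕ) : ℕ → ℕ := posRow (T.entry (j+1)) (T.rows j)

lemma rows_zero (i : ℕ) : T.rows 0 i = i := rfl

lemma rows_succ (j : ℕ) :
    T.rows (j+1) = nextRow (T.entry (j+1)) (T.rowLen (j+1)) (T.rows j) := rfl

lemma avail_rows : ∀ j, Avail (T.entry (j+1)) (T.rows j) (T.rowLen (j+1)) := by
  intro j
  induction j with
  | zero =>
    intro k hk
    refine ⟨(Finset.range (k+1)).image (fun m => T.entry 1 k + m), ?_, ?_⟩
    · rw [Finset.card_image_of_injective _ (add_right_injective _), Finset.card_range]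
    · intro i hi
      simp only [Finset.mem_image, Finset.mem_range] at hi
      obtain ⟨m, _, rfl⟩ := hi
      simp only [rows_zero]
      have : T.entry (0+1) k = T.entry 1 k := rfl
      omega
  | succ j ih =>
    intro k hk
    have hk1 : k < T.rowLen (j+1) := lt_of_lt_of_le hk (T.rowLen_decr (j+1) (by omega))
    refine ⟨(Finset.range (k+1)).image (T.pRow j), ?_, ?_⟩
    · rw [Finset.card_image_of_injOn, Finset.card_range]
      intro m1 hm1 m2 hm2 he
      simp only [Finset.mem_coe, Finset.mem_range] at hm1 hm2
      exact posRow_inj ih (by omega) (by omega) he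
    · intro i hi
      simp only [Finset.mem_image, Finset.mem_range] at hi
      obtain ⟨m, hm, rfl⟩ := hi
      have hval : T.rows (j+1) (T.pRow j m) = T.entry (j+1) m := by
        rw [rows_succ]
        exact nextRow_posRow ih (by omega)
      rw [hval]
      have h1 : T.entry (j+1) k ≤ T.entry (j+1) m := by
        rcases Nat.lt_or_ge m k with h | h
        · exact le_of_lt (T.row_strictAnti h hk1)
        · have : m = k := by omega
          subst this; exact le_refl _
      have h2 : T.entry (j+2) k ≤ T.entry (j+1) k := T.col_weak (j+1) k (by omega) hk
      have h3 : T.entry (j+1+1) k = T.entry (j+2) k := rfl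
      omega

lemma rows_pRow {j k : ℕ} (hk : k < T.rowLen (j+1)) :
    T.rows (j+1) (T.pRow j k) = T.entry (j+1) k := by
  rw [rows_succ]
  exact nextRow_posRow (T.avail_rows j) hk

lemma rows_le_prev {j k : ℕ} (hk : k < T.rowLen (j+1)) :
    T.entry (j+1) k ≤ T.rows j (T.pRow j k) :=
  (posRow_mem (T.avail_rows j) hk).1

lemma rows_ne_zero_iff {j i : ℕ} :
    T.rows (j+1) i ≠ 0 ↔ ∃ k, k < T.rowLen (j+1) ∧ T.pRow j k = i := by
  constructor
  · intro h
    rw [rows_succ] at h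
    exact nextRow_ne_zero h
  · rintro ⟨k, hk, rfl⟩
    rw [T.rows_pRow hk]
    have := T.pos (j+1) k (by omega) hk
    omega

lemma rows_zero_succ {j i : ℕ} (h : T.rows (j+1) i = 0) : T.rows (j+2) i = 0 := by
  by_contra hne
  obtain ⟨k, hk, hpos⟩ := T.rows_ne_zero_iff.mp hne
  have h1 := T.rows_le_prev (j := j+1) hk
  rw [hpos] at h1
  have := T.pos (j+2) k (by omega) hk
  have h3 : T.entry (j+1+1) k = T.entry (j+2) k := rfl
  omega

lemma rows_zero_mono {j j' i : ℕ} (h : T.rows (j+1) i = 0) (hjj : j ≤ j') :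
    T.rows (j'+1) i = 0 := by
  induction j' with
  | zero =>
    have : j = 0 := by omega
    subst this; exact h
  | succ j' ih =>
    rcases Nat.lt_or_ge j' (j) with h' | h'
    · have : j = j' + 1 := by omega
      subst this; exact h
    · exact T.rows_zero_succ (ih h')

/-- the shape of the inverse filling -/
noncomputable def shapeF (i : ℕ) : ℕ := sInf {j | T.rows (j+1) i = 0}

lemma shape_set_nonempty (i : ℕ) : {j | T.rows (j+1) i = 0}.Nonempty := by
  obtain ⟨N, hN⟩ := T.support
  refine ⟨N, ?_⟩
  simp only [Set.mem_setOf_eq, rows_succ]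
  apply nextRow_eq_zero
  rintro ⟨k, hk, -⟩
  have := hN (N+1) (by omega)
  omega

lemma occF {i j : ℕ} (hj : 1 ≤ j) : j ≤ T.shapeF i ↔ 1 ≤ T.rows j i := by
  constructor
  · intro h
    have hlt : j - 1 < sInf {j | T.rows (j+1) i = 0} := by
      unfold shapeF at h; omega
    have := Nat.notMem_of_lt_sInf hlt
    simp only [Set.mem_setOf_eq] at this
    have hj1 : j - 1 + 1 = j := by omega
    rw [hj1] at this
    omega
  · intro h
    by_contra hc
    push_neg at hc
    have hmem := Nat.sInf_mem (T.shape_set_nonempty i)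
    simp only [Set.mem_setOf_eq] at hmem
    have h0 : T.rows (j - 1 + 1) i = 0 := T.rows_zero_mono hmem (by unfold shapeF at hc; omega)
    have hj1 : j - 1 + 1 = j := by omega
    rw [hj1] at h0
    omega

lemma zero_outsideF {i j : ℕ} (h : T.shapeF i < j) : T.rows j i = 0 := by
  have : ¬ (1 ≤ T.rows j i) := by
    intro h1
    have := (T.occF (i := i) (j := j) (by omega)).mpr h1
    omega
  omega

lemma shapeF_zero : T.shapeF 0 = 0 := by
  have h1 : T.rows 1 0 = 0 := by
    by_contra hne
    obtain ⟨k, hk, hpos⟩ := T.rows_ne_zero_iff.mp hne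
    have h1 := T.rows_le_prev (j := 0) hk
    rw [hpos] at h1
    rw [T.rows_zero] at h1
    have := T.pos 1 k (by omega) hk
    have h3 : T.entry (0+1) k = T.entry 1 k := rfl
    omega
  exact Nat.sInf_eq_zero.mpr (Or.inl h1)

lemma supportF : ∃ N, ∀ i, N ≤ i → T.shapeF i = 0 := by
  refine ⟨(Finset.range (T.rowLen 1)).sup (T.pRow 0) + 1, fun i hi => ?_⟩
  have h1 : T.rows 1 i = 0 := by
    by_contra hne
    obtain ⟨k, hk, hpos⟩ := T.rows_ne_zero_iff.mp hne
    have : T.pRow 0 k ≤ (Finset.range (T.rowLen 1)).sup (T.pRow 0) :=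
      Finset.le_sup (Finset.mem_range.mpr hk)
    omega
  exact Nat.sInf_eq_zero.mpr (Or.inl h1)

lemma noDescentF {i j : ℕ} (h : j + 1 ≤ T.shapeF i) : T.rows (j+1) i ≤ T.rows j i := by
  have hne : T.rows (j+1) i ≠ 0 := by
    have := (T.occF (i := i) (j := j+1) (by omega)).mp h
    omega
  obtain ⟨k, hk, hpos⟩ := T.rows_ne_zero_iff.mp hne
  subst hpos
  rw [T.rows_pRow hk]
  exact T.rows_le_prev hk

lemma distinctF {i1 i2 j : ℕ} (h12 : i1 < i2) (hj : 1 ≤ j) (h1 : j ≤ T.shapeF i1)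
    (h2 : j ≤ T.shapeF i2) : T.rows j i1 ≠ T.rows j i2 := by
  obtain ⟨j', rfl⟩ : ∃ j', j = j' + 1 := ⟨j - 1, by omega⟩
  have hne1 : T.rows (j'+1) i1 ≠ 0 := by have := (T.occF (by omega : 1 ≤ j'+1)).mp h1; omega
  have hne2 : T.rows (j'+1) i2 ≠ 0 := by have := (T.occF (by omega : 1 ≤ j'+1)).mp h2; omega
  obtain ⟨k1, hk1, hp1⟩ := T.rows_ne_zero_iff.mp hne1
  obtain ⟨k2, hk2, hp2⟩ := T.rows_ne_zero_iff.mp hne2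
  subst hp1; subst hp2
  rw [T.rows_pRow hk1, T.rows_pRow hk2]
  have hkne : k1 ≠ k2 := by intro h; subst h; omega
  rcases Nat.lt_or_ge k1 k2 with h | h
  · exact ne_of_gt (T.row_strictAnti h hk2)
  · exact ne_of_lt (T.row_strictAnti (by omega) hk1)

lemma greedyF {i1 i2 j : ℕ} (h12 : i1 < i2) (h1 : j ≤ T.shapeF i1)
    (h2 : j + 1 ≤ T.shapeF i2) (hle : T.rows (j+1) i2 ≤ T.rows j i1) :
    j + 1 ≤ T.shapeF i1 ∧ T.rows (j+1) i2 < T.rows (j+1) i1 := by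
  have hne2 : T.rows (j+1) i2 ≠ 0 := by
    have := (T.occF (by omega : 1 ≤ j+1)).mp h2; omega
  obtain ⟨k, hk, hpos⟩ := T.rows_ne_zero_iff.mp hne2
  subst hpos
  rw [T.rows_pRow hk] at hle ⊢
  obtain ⟨k', hk', hp'⟩ := posRow_min (vals := T.entry (j+1)) (prev := T.rows j)
    (k := k) (i := i1) h12 hle
  have hval : T.rows (j+1) i1 = T.entry (j+1) k' := by
    rw [← hp']
    exact T.rows_pRow (by omega)
  have hocc : j + 1 ≤ T.shapeF i1 := by
    rw [T.occF (by omega : 1 ≤ j+1), hval]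
    have := T.pos (j+1) k' (by omega) (by omega)
    omega
  refine ⟨hocc, ?_⟩
  rw [hval]
  exact T.row_strictAnti hk' hk

/-- the inverse map σ : greedy insertion -/
noncomputable def sigma : SSAF where
  shape := T.shapeF
  entry := fun i j => T.rows j i
  shape_zero := T.shapeF_zero
  support := T.supportF
  basement := fun i => T.rows_zero i
  pos := by
    intro i j hj hsh
    exact (T.occF hj).mp hsh
  zero_outside := by
    intro i j h
    exact T.zero_outsideF h
  noDescent := by
    intro i j h
    exact T.noDescentF h
  typeA := by
    apply mk_typeA
    · intro i j h; exact T.noDescentF h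
    · intro i1 i2 j h12 hj h1 h2; exact T.distinctF h12 hj h1 h2
    · intro i1 i2 j h12 h1 h2 hle; exact T.greedyF h12 h1 h2 hle
  typeB := by
    apply mk_typeB
    · intro i j hj; exact T.occF hj
    · intro i j h; exact T.noDescentF h
    · intro i1 i2 j h12 h1 h2 hle; exact T.greedyF h12 h1 h2 hle

end RSSYT

namespace RSSYT

lemma ext' {T T' : RSSYT} (h1 : T.rowLen = T'.rowLen) (h2 : T.entry = T'.entry) : T = T' := by
  cases T; cases T'; cases h1; cases h2; rfl

lemma colFinset_sigma (T : RSSYT) (j : ℕ) :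
    T.sigma.colFinset (j+1) = (Finset.range (T.rowLen (j+1))).image (T.pRow j) := by
  ext i
  rw [SSAF.mem_colFinset]
  have hsh : T.sigma.shape = T.shapeF := rfl
  rw [hsh]
  constructor
  · rintro ⟨-, h⟩
    have h1 := (T.occF (by omega : 1 ≤ j+1)).mp h
    have hne : T.rows (j+1) i ≠ 0 := by omega
    obtain ⟨k, hk, hp⟩ := T.rows_ne_zero_iff.mp hne
    simp only [Finset.mem_image, Finset.mem_range]
    exact ⟨k, hk, hp⟩
  · intro h
    simp only [Finset.mem_image, Finset.mem_range] at h
    obtain ⟨k, hk, hp⟩ := h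
    refine ⟨by omega, (T.occF (by omega : 1 ≤ j+1)).mpr ?_⟩
    have : T.rows (j+1) i ≠ 0 := T.rows_ne_zero_iff.mpr ⟨k, hk, hp⟩
    omega

lemma card_colFinset_sigma (T : RSSYT) (j : ℕ) :
    (T.sigma.colFinset (j+1)).card = T.rowLen (j+1) := by
  rw [colFinset_sigma, Finset.card_image_of_injOn, Finset.card_range]
  intro m1 hm1 m2 hm2 he
  simp only [Finset.mem_coe, Finset.mem_range] at hm1 hm2
  exact posRow_inj (T.avail_rows j) hm1 hm2 he

lemma rowFinset_sigma (T : RSSYT) (j : ℕ) :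
    T.sigma.rowFinset (j+1) = (Finset.range (T.rowLen (j+1))).image (fun k => T.entry (j+1) k) := by
  rw [SSAF.rowFinset, colFinset_sigma, Finset.image_image]
  apply Finset.image_congr
  intro k hk
  simp only [Finset.mem_coe, Finset.mem_range] at hk
  show T.sigma.entry (T.pRow j k) (j+1) = T.entry (j+1) k
  have he : T.sigma.entry (T.pRow j k) (j+1) = T.rows (j+1) (T.pRow j k) := rfl
  rw [he, T.rows_pRow hk]

lemma rho_sigma (T : RSSYT) : T.sigma.rho = T := by
  apply ext'
  · funext j
    show (T.sigma.colFinset j).card = T.rowLen j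
    cases j with
    | zero =>
      rw [T.rowLen_zero]
      simp [SSAF.colFinset]
    | succ j => exact T.card_colFinset_sigma j
  · funext j k
    show nthDesc (T.sigma.rowFinset j) k = T.entry j k
    cases j with
    | zero =>
      have h1 : T.sigma.rowFinset 0 = ∅ := by
        simp [SSAF.rowFinset, SSAF.colFinset]
      rw [h1, T.zero_outside 0 k (by rw [T.rowLen_zero]; omega)]
      exact nthDesc_eq_zero _ (by simp)
    | succ j =>
      rcases Nat.lt_or_ge k (T.rowLen (j+1)) with hk | hk
      · rw [rowFinset_sigma]
        exact nthDesc_image_strictAnti (T.entry (j+1)) (T.rowLen (j+1))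
          (fun k1 k2 h h2 => T.row_strictAnti h h2) hk
      · rw [T.zero_outside (j+1) k hk]
        apply nthDesc_eq_zero
        rw [SSAF.card_rowFinset, T.card_colFinset_sigma]
        exact hk

end RSSYT

/-- The row-sorting map `ρ` is a weight-preserving bijection from
semi-skyline augmented fillings to reverse semi-standard Young tableaux: each row of
`ρ F` carries exactly the set of entries of the corresponding row of `F` (rows are
sets, since rows of an SSAF have distinct entries), and the row lengths of `ρ F` are
exactly the numbers of columns of `F` of height at least that row index (so the shape
of `F` is a rearrangement of the column data determined by the row lengths). -/
theorem rho_bijection :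
    ∃ ρ : SSAF → RSSYT, Function.Bijective ρ ∧
      ∀ F : SSAF, ∀ j, 1 ≤ j →
        (ρ F).rowLen j = Set.ncard {i | j ≤ F.shape i} ∧
        {v | ∃ k, k < (ρ F).rowLen j ∧ (ρ F).entry j k = v} =
          {v | ∃ i, j ≤ F.shape i ∧ F.entry i j = v} := by
  refine ⟨SSAF.rho, ⟨SSAF.rho_injective, fun T => ⟨T.sigma, T.rho_sigma⟩⟩, ?_⟩
  intro F j hj
  constructor
  · show (F.colFinset j).card = _
    rw [Set.ncard_eq_toFinset_card _ (F.col_finite j hj), SSAF.colFinset, dif_pos hj]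
  · ext v
    simp only [Set.mem_setOf_eq]
    have hcard : (F.rho).rowLen j = (F.rowFinset j).card := by
      show (F.colFinset j).card = _
      rw [SSAF.card_rowFinset]
    constructor
    · rintro ⟨k, hk, rfl⟩
      have hk' : k < (F.rowFinset j).card := by rw [← hcard]; exact hk
      have := SSAF.mem_rowFinset.mp (nthDesc_mem _ hk')
      obtain ⟨i, ⟨-, hsh⟩, he⟩ := this
      exact ⟨i, hsh, he⟩
    · rintro ⟨i, hsh, rfl⟩
      have hmem : F.entry i j ∈ F.rowFinset j :=
        SSAF.mem_rowFinset.mpr ⟨i, ⟨hj, hsh⟩, rfl⟩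
      obtain ⟨k, hk, he⟩ := (mem_iff_nthDesc _ _).mp hmem
      exact ⟨k, by rw [hcard]; exact hk, he⟩
end

section
/- For every weak composition γ of n into k parts, there is exactly one semi-skyline augmented filling of shape γ and content γ, namely the filling in which every cell of column i contains the entry i; in particular NK_{γ,γ} = 1. -/
/-- The number of (non-basement) cells of `F` carrying the entry `v`. -/
noncomputable def SSAF.count (F : SSAF) (v : ℕ) : ℕ :=
  Set.ncard {c : ℕ × ℕ | 1 ≤ c.2 ∧ c.2 ≤ F.shape c.1 ∧ F.entry c.1 c.2 = v}

/-- auxiliary: column set -/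
def colSet (γ : ℕ → ℕ) (v : ℕ) : Set (ℕ × ℕ) := (fun j => (v, j)) '' Set.Icc 1 (γ v)

lemma mem_colSet {γ : ℕ → ℕ} {v : ℕ} {c : ℕ × ℕ} :
    c ∈ colSet γ v ↔ c.1 = v ∧ 1 ≤ c.2 ∧ c.2 ≤ γ v := by
  obtain ⟨i, j⟩ := c
  constructor
  · rintro ⟨j', hj', h⟩
    simp only [Prod.mk.injEq] at h
    exact ⟨h.1.symm, h.2 ▸ hj'.1, h.2 ▸ hj'.2⟩
  · rintro ⟨h1, h2, h3⟩
    exact ⟨j, ⟨h2, h3⟩, by rw [← h1]⟩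

lemma colSet_finite (γ : ℕ → ℕ) (v : ℕ) : (colSet γ v).Finite :=
  (Set.finite_Icc _ _).image _

lemma ncard_colSet (γ : ℕ → ℕ) (v : ℕ) : (colSet γ v).ncard = γ v := by
  rw [colSet, Set.ncard_image_of_injective _ (fun a b h => by simpa using h),
    ← Finset.coe_Icc, Set.ncard_coe_finset, Nat.card_Icc]
  omega

lemma SSAF.entry_le (F : SSAF) (i : ℕ) : ∀ j, j ≤ F.shape i → F.entry i j ≤ i := by
  intro j
  induction j with
  | zero => intro _; exact (F.basement i).le
  | succ j ih => intro h; exact (F.noDescent i j h).trans (ih (by omega))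

lemma step (γ : ℕ → ℕ) (k : ℕ) (hk : ∀ i, k < i → γ i = 0)
    (F : SSAF) (hs : F.shape = γ) (hc : ∀ v, 1 ≤ v → F.count v = γ v)
    (v : ℕ) (hv : 1 ≤ v)
    (IH : ∀ w, v < w → w ≤ k →
      {c : ℕ × ℕ | 1 ≤ c.2 ∧ c.2 ≤ F.shape c.1 ∧ F.entry c.1 c.2 = w} = colSet γ w) :
    {c : ℕ × ℕ | 1 ≤ c.2 ∧ c.2 ≤ F.shape c.1 ∧ F.entry c.1 c.2 = v} = colSet γ v := by
  apply Set.eq_of_subset_of_ncard_le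
  · rintro ⟨i, j⟩ ⟨hj1, hj2, he⟩
    have hvi : v ≤ i := he ▸ F.entry_le i j hj2
    have hik : i ≤ k := by
      by_contra h
      have : γ i = 0 := hk i (by omega)
      rw [hs, this] at hj2; omega
    have hiv : i = v := by
      by_contra h
      have hlt : v < i := by omega
      have := IH i hlt hik
      have hmem : (i, j) ∈ colSet γ i := mem_colSet.2 ⟨rfl, hj1, hs ▸ hj2⟩
      rw [← this] at hmem
      exact absurd (hmem.2.2.symm.trans he) (by omega)
    exact mem_colSet.2 ⟨hiv, hj1, by rw [← hiv, ← hs]; exact hj2⟩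
  · have h1 : F.count v = γ v := hc v hv
    rw [SSAF.count] at h1
    rw [ncard_colSet, h1]
  · exact colSet_finite γ v

lemma key (γ : ℕ → ℕ) (k : ℕ) (hk : ∀ i, k < i → γ i = 0)
    (F : SSAF) (hs : F.shape = γ) (hc : ∀ v, 1 ≤ v → F.count v = γ v) :
    ∀ m v, 1 ≤ v → k - v ≤ m →
      {c : ℕ × ℕ | 1 ≤ c.2 ∧ c.2 ≤ F.shape c.1 ∧ F.entry c.1 c.2 = v} = colSet γ v := by
  intro m
  induction m with
  | zero =>
    intro v hv hm
    exact step γ k hk F hs hc v hv (fun w hw1 hw2 => absurd hw2 (by omega))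
  | succ m ih =>
    intro v hv hm
    exact step γ k hk F hs hc v hv (fun w hw1 hw2 => ih w (by omega) (by omega))

lemma entries_eq (γ : ℕ → ℕ) (k : ℕ) (hk : ∀ i, k < i → γ i = 0)
    (F : SSAF) (hs : F.shape = γ) (hc : ∀ v, 1 ≤ v → F.count v = γ v) :
    ∀ i j, 1 ≤ j → j ≤ γ i → F.entry i j = i := by
  intro i j hj1 hj2
  have hj2' : j ≤ F.shape i := hs ▸ hj2
  set v := F.entry i j with hv
  have hv1 : 1 ≤ v := F.pos i j hj1 hj2'
  have hmem : (i, j) ∈ {c : ℕ × ℕ | 1 ≤ c.2 ∧ c.2 ≤ F.shape c.1 ∧ F.entry c.1 c.2 = v} :=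
    ⟨hj1, hj2', rfl⟩
  rw [key γ k hk F hs hc (k - v) v hv1 le_rfl] at hmem
  exact (mem_colSet.1 hmem).1.symm

lemma SSAF.ext'_s11 {F G : SSAF} (h1 : F.shape = G.shape) (h2 : F.entry = G.entry) : F = G := by
  cases F; cases G; simp_all

/-- the canonical filling -/
noncomputable def canon (γ : ℕ → ℕ) (k : ℕ) (h0 : γ 0 = 0) (hk : ∀ i, k < i → γ i = 0) : SSAF where
  shape := γ
  entry := fun i j => if j ≤ γ i then i else 0
  shape_zero := h0
  support := ⟨k + 1, fun i hi => hk i (by omega)⟩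
  basement := fun i => if_pos (Nat.zero_le _)
  pos := by
    intro i j hj1 hj2
    beta_reduce
    rw [if_pos hj2]
    rcases i with _ | i
    · rw [h0] at hj2; omega
    · omega
  zero_outside := fun i j h => if_neg (by omega)
  noDescent := by intro i j h; beta_reduce; rw [if_pos h, if_pos (by omega)]
  typeA := by
    intro i1 i2 j h12 hsh hj1 hj2
    beta_reduce
    rw [if_pos hj2, if_pos (hj2.trans hsh), if_pos (le_trans (by omega) (hj2.trans hsh))]
    simp only [ind]
    split_ifs <;> omega
  typeB := by
    intro i1 i2 j h12 hsh hj1 hj2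
    beta_reduce
    rw [if_pos hj2, if_pos hj1, if_pos (by omega)]
    simp only [ind]
    split_ifs <;> omega

lemma canon_count (γ : ℕ → ℕ) (k : ℕ) (h0 : γ 0 = 0) (hk : ∀ i, k < i → γ i = 0)
    (v : ℕ) (hv : 1 ≤ v) : (canon γ k h0 hk).count v = γ v := by
  have hset : {c : ℕ × ℕ | 1 ≤ c.2 ∧ c.2 ≤ (canon γ k h0 hk).shape c.1 ∧
      (canon γ k h0 hk).entry c.1 c.2 = v} = colSet γ v := by
    ext ⟨i, j⟩
    simp only [canon, Set.mem_setOf_eq, mem_colSet]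
    constructor
    · rintro ⟨hj1, hj2, he⟩
      rw [if_pos hj2] at he
      exact ⟨he, hj1, he ▸ hj2⟩
    · rintro ⟨h1, h2, h3⟩
      subst h1
      exact ⟨h2, h3, if_pos h3⟩
  rw [SSAF.count, hset, ncard_colSet]

/-- For every weak composition `γ` (of `n`) into `k` parts there is
exactly one semi-skyline augmented filling of shape `γ` and content `γ`, namely the
filling in which every cell of column `i` carries the entry `i`; in particular
`NK_{γ,γ} = 1`. -/
theorem unique_ssaf_shape_content_self (γ : ℕ → ℕ) (k : ℕ)
    (h0 : γ 0 = 0) (hk : ∀ i, k < i → γ i = 0) :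
    (∃! F : SSAF, F.shape = γ ∧ ∀ v, 1 ≤ v → F.count v = γ v) ∧
    (∀ F : SSAF, F.shape = γ → (∀ v, 1 ≤ v → F.count v = γ v) →
      ∀ i j, 1 ≤ j → j ≤ γ i → F.entry i j = i) := by
  constructor
  · refine ⟨canon γ k h0 hk, ⟨rfl, canon_count γ k h0 hk⟩, ?_⟩
    rintro F ⟨hs, hc⟩
    apply SSAF.ext'_s11 hs
    funext i j
    show F.entry i j = if j ≤ γ i then i else 0
    rcases Nat.eq_zero_or_pos j with hj | hj
    · subst hj; rw [if_pos (Nat.zero_le _), F.basement]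
    · by_cases h : j ≤ γ i
      · rw [if_pos h]; exact entries_eq γ k hk F hs hc i j hj h
      · rw [if_neg h]; exact F.zero_outside i j (by rw [hs]; omega)
  · exact fun F hs hc => entries_eq γ k hk F hs hc
end

section
/- The polynomials Ê_γ(x;0,0), defined as the generating functions of semi-skyline augmented fillings of shape γ, form a Q-basis of the polynomial ring: the transition matrix from {Ê_γ(x;0,0) : γ a weak composition of n into m parts} to the monomial basis {x^μ}, ordered by reverse dominance, is upper triangular with 1's on the diagonal, hence the Ê_γ(x;0,0) are linearly independent and span the degree-n polynomials in m variables. -/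
/-- The shape function on columns `1, …, m` determined by `γ : Fin m → ℕ`. -/
def shapeOf (m : ℕ) (γ : Fin m → ℕ) : ℕ → ℕ := fun i =>
  if h : 1 ≤ i ∧ i ≤ m then γ ⟨i - 1, by omega⟩ else 0

/-- `NK γ μ`: the number of semi-skyline augmented fillings of shape `γ` and
content `μ` (where `μ v` counts the entries equal to `v + 1`). -/
noncomputable def NK (m : ℕ) (γ μ : Fin m → ℕ) : ℕ :=
  Set.ncard {F : SSAF | F.shape = shapeOf m γ ∧ ∀ v : Fin m, F.count ((v : ℕ) + 1) = μ v}

/-- `Ê_γ(x; 0, 0)`: the generating function of semi-skyline augmented fillings of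
shape `γ`, as a polynomial in `m` variables (for `γ` a composition of `n`). -/
noncomputable def Ehat (m n : ℕ) (γ : Fin m → ℕ) : MvPolynomial (Fin m) ℚ :=
  ∑ μ ∈ Finset.Nat.antidiagonalTuple m n,
    (NK m γ μ : ℚ) • MvPolynomial.monomial (Finsupp.equivFunOnFinite.symm μ) 1

/-- Reverse dominance order on weak compositions into `m` parts (parts indexed
`1, …, m` via `i ↦ (i : ℕ) + 1`). -/
def RevDom (m : ℕ) (μ γ : Fin m → ℕ) : Prop :=
  ∀ k : ℕ, ∑ i ∈ Finset.univ.filter (fun i : Fin m => k ≤ (i : ℕ) + 1), μ i ≤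
    ∑ i ∈ Finset.univ.filter (fun i : Fin m => k ≤ (i : ℕ) + 1), γ i

/-!
Entries weakly decrease up each column from the basement entry `i`, so every entry of
column `i` is at most `i`. Hence the cells with entries `≥ k` sit in columns `≥ k`, which is
the dominance `μ ≤ γ` whenever `NK γ μ ≠ 0`. If the content equals the shape, a downward
induction over the columns shows that the entries `i` fill exactly column `i`, so the only such
filling has constant columns, and it is an SSAF: `NK γ γ = 1`. A transition matrix that is
unitriangular for an order with a strictly monotone weight can be inverted by induction on the
weight, so the `Ê_γ` span the monomials of degree `n`; being as many as these monomials, they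
are linearly independent.
-/

theorem Set.ncard_eq_sum_ncard_fiber {α β : Type*} [DecidableEq β] {S : Set α} (hS : S.Finite)
    {f : α → β} {t : Finset β} (hf : Set.MapsTo f S t) :
    S.ncard = ∑ y ∈ t, {x ∈ S | f x = y}.ncard := by
  rw [Set.ncard_eq_toFinset_card S hS,
    Finset.card_eq_sum_card_fiberwise (fun x hx => hf (hS.mem_toFinset.1 hx))]
  refine Finset.sum_congr rfl fun y _ => ?_
  rw [← Set.ncard_coe_finset]
  congr 1
  ext x
  simp

section Unitriangular

open Submodule

variable {R V ι α : Type*} [AddCommGroup V] [Preorder α] [WellFoundedLT α]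
  {s : Finset ι} {b e : ι → V} {c : ι → ι → R} (w : ι → α)

theorem mem_span_range_of_unitriangular [Ring R] [Module R V]
    (he : ∀ γ ∈ s, e γ = ∑ μ ∈ s, c γ μ • b μ) (hdiag : ∀ γ ∈ s, c γ γ = 1)
    (htri : ∀ γ ∈ s, ∀ μ ∈ s, c γ μ ≠ 0 → μ ≠ γ → w μ < w γ) :
    ∀ μ ∈ s, b μ ∈ span R (Set.range fun γ : s => e γ) := by
  classical
  intro μ
  induction μ using (InvImage.wf w wellFounded_lt).induction with
  | _ μ ih =>
    intro hμ
    have hb : b μ = e μ - ∑ ν ∈ s.erase μ, c μ ν • b ν := by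
      rw [he μ hμ, ← Finset.add_sum_erase s _ hμ, hdiag μ hμ, one_smul, add_sub_cancel_right]
    rw [hb]
    refine sub_mem (subset_span ⟨⟨μ, hμ⟩, rfl⟩) (sum_mem fun ν hν => ?_)
    obtain ⟨hνμ, hνs⟩ := Finset.mem_erase.1 hν
    by_cases hc : c μ ν = 0
    · rw [hc, zero_smul]
      exact zero_mem _
    · exact smul_mem _ _ (ih ν (htri μ hμ ν hνs hc hνμ) hνs)

theorem span_range_eq_of_unitriangular [Ring R] [Module R V]
    (he : ∀ γ ∈ s, e γ = ∑ μ ∈ s, c γ μ • b μ) (hdiag : ∀ γ ∈ s, c γ γ = 1)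
    (htri : ∀ γ ∈ s, ∀ μ ∈ s, c γ μ ≠ 0 → μ ≠ γ → w μ < w γ) :
    span R (Set.range fun γ : s => e γ) = span R (b '' s) := by
  refine le_antisymm (span_le.2 ?_) (span_le.2 ?_)
  · rintro _ ⟨⟨γ, hγ⟩, rfl⟩
    change e γ ∈ _
    rw [he γ hγ]
    exact sum_mem fun μ hμ => smul_mem _ _ (subset_span (Set.mem_image_of_mem b hμ))
  · rintro _ ⟨μ, hμ, rfl⟩
    exact mem_span_range_of_unitriangular w he hdiag htri μ hμ

theorem linearIndependent_of_unitriangular [DivisionRing R] [Module R V]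
    (he : ∀ γ ∈ s, e γ = ∑ μ ∈ s, c γ μ • b μ) (hdiag : ∀ γ ∈ s, c γ γ = 1)
    (htri : ∀ γ ∈ s, ∀ μ ∈ s, c γ μ ≠ 0 → μ ≠ γ → w μ < w γ)
    (hb : LinearIndependent R fun μ : s => b μ) :
    LinearIndependent R fun γ : s => e γ := by
  rw [linearIndependent_iff_card_eq_finrank_span, Set.finrank,
    span_range_eq_of_unitriangular w he hdiag htri, Set.image_eq_range]
  exact (finrank_span_eq_card hb).symm

end Unitriangular

namespace SSAF

def cells (F : SSAF) : Set (ℕ × ℕ) := {c | 1 ≤ c.2 ∧ c.2 ≤ F.shape c.1}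

theorem count_eq_ncard (F : SSAF) (v : ℕ) :
    F.count v = {c ∈ F.cells | F.entry c.1 c.2 = v}.ncard := by
  simp only [count, cells, Set.sep_ofPred, and_assoc]

theorem cells_finite (F : SSAF) : F.cells.Finite := by
  obtain ⟨N, hN⟩ := F.support
  refine ((Set.finite_Iio N).biUnion fun i _ =>
    (Set.finite_Icc 1 (F.shape i)).image (Prod.mk i)).subset ?_
  rintro ⟨i, j⟩ ⟨h1, h2⟩
  dsimp only at h1 h2
  simp only [Set.mem_iUnion, Set.mem_image, Set.mem_Icc, Set.mem_Iio, Prod.mk.injEq]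
  refine ⟨i, ?_, j, ⟨h1, h2⟩, rfl, rfl⟩
  by_contra h
  have := hN i (by omega)
  omega

theorem entry_le_of_le_shape (F : SSAF) {i j : ℕ} (h : j ≤ F.shape i) : F.entry i j ≤ i := by
  induction j with
  | zero => exact (F.basement i).le
  | succ j ih => exact (F.noDescent i j h).trans (ih (by omega))

theorem ncard_cells_column (F : SSAF) (i : ℕ) : {c ∈ F.cells | c.1 = i}.ncard = F.shape i := by
  have : {c ∈ F.cells | c.1 = i} = Prod.mk i '' Set.Icc 1 (F.shape i) := by
    ext ⟨a, j⟩
    simp only [cells, Set.mem_ofPred_eq, Set.mem_image, Set.mem_Icc, Prod.mk.injEq]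
    constructor
    · rintro ⟨⟨h1, h2⟩, rfl⟩
      exact ⟨j, ⟨h1, h2⟩, rfl, rfl⟩
    · rintro ⟨j, ⟨h1, h2⟩, rfl, rfl⟩
      exact ⟨⟨h1, h2⟩, rfl⟩
  rw [this, Set.ncard_image_of_injective _ (Prod.mk_right_injective i), Set.ncard_Icc_nat]
  omega

theorem ext_of_cells {F G : SSAF} (hshape : F.shape = G.shape)
    (hentry : ∀ c ∈ F.cells, F.entry c.1 c.2 = G.entry c.1 c.2) : F = G := by
  have : F.entry = G.entry := by
    funext i j
    rcases Nat.eq_zero_or_pos j with rfl | hj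
    · rw [F.basement, G.basement]
    by_cases hle : j ≤ F.shape i
    · exact hentry (i, j) ⟨hj, hle⟩
    · rw [F.zero_outside i j (by omega), G.zero_outside i j (by rw [← hshape]; omega)]
  cases F; cases G; cases hshape; cases this; rfl

theorem count_eq_shape_of_entry_eq_column (F : SSAF)
    (h : ∀ c ∈ F.cells, F.entry c.1 c.2 = c.1) (i : ℕ) : F.count i = F.shape i := by
  rw [count_eq_ncard, ← ncard_cells_column]
  congr 1
  ext c
  simp only [Set.mem_ofPred_eq, and_congr_right_iff]
  intro hc
  rw [h c hc]

theorem entry_eq_column_of_count_eq_shape (F : SSAF)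
    (h : ∀ i, F.shape i ≠ 0 → F.count i = F.shape i) :
    ∀ c ∈ F.cells, F.entry c.1 c.2 = c.1 := by
  obtain ⟨N, hN⟩ := F.support
  -- the entries `i` lie in columns `≥ i`; once the columns `> i` are known to be constant,
  -- they fill a subset of column `i` of the same size, i.e. all of it
  have step : ∀ i, (∀ c ∈ F.cells, i < c.1 → F.entry c.1 c.2 = c.1) →
      ∀ c ∈ F.cells, c.1 = i → F.entry c.1 c.2 = i := by
    intro i hright c hc hci
    have hsub : {c ∈ F.cells | F.entry c.1 c.2 = i} ⊆ {c ∈ F.cells | c.1 = i} := by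
      rintro d ⟨hd, hdi⟩
      refine ⟨hd, le_antisymm ?_ (hdi ▸ F.entry_le_of_le_shape hd.2)⟩
      by_contra hlt
      have := hright d hd (by omega)
      omega
    have hi : F.shape i ≠ 0 := by
      subst hci
      have := hc.1
      have := hc.2
      omega
    have heq := Set.eq_of_subset_of_ncard_le hsub
      (by rw [ncard_cells_column, ← count_eq_ncard, h i hi])
      (F.cells_finite.subset (Set.sep_subset _ _))
    have hc' : c ∈ {c ∈ F.cells | c.1 = i} := ⟨hc, hci⟩
    rw [← heq] at hc'
    exact hc'.2
  have : ∀ d, ∀ c ∈ F.cells, N ≤ c.1 + d → F.entry c.1 c.2 = c.1 := by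
    intro d
    induction d with
    | zero =>
      intro c hc hNc
      have := hN c.1 hNc
      have := hc.2
      have := hc.1
      omega
    | succ d ih =>
      exact fun c hc hNc => step c.1 (fun c' hc' hlt => ih c' hc' (by omega)) c hc rfl
  exact fun c hc => this N c hc (by omega)

end SSAF

theorem shapeOf_eq_zero {m : ℕ} {γ : Fin m → ℕ} {i : ℕ} (h : ¬(1 ≤ i ∧ i ≤ m)) :
    shapeOf m γ i = 0 :=
  dif_neg h

theorem shapeOf_succ {m : ℕ} (γ : Fin m → ℕ) (v : Fin m) : shapeOf m γ (v + 1) = γ v :=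
  dif_pos ⟨by omega, by omega⟩

theorem SSAF.column_mem_Icc_of_mem_cells {m : ℕ} {γ : Fin m → ℕ} {F : SSAF}
    (hF : F.shape = shapeOf m γ) {c : ℕ × ℕ} (hc : c ∈ F.cells) : 1 ≤ c.1 ∧ c.1 ≤ m := by
  by_contra h
  have hlen : c.2 ≤ shapeOf m γ c.1 := hF ▸ hc.2
  rw [shapeOf_eq_zero h] at hlen
  have := hc.1
  omega

def columnFilling (m : ℕ) (γ : Fin m → ℕ) : SSAF where
  shape := shapeOf m γ
  entry i j := if j ≤ shapeOf m γ i then i else 0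
  shape_zero := shapeOf_eq_zero (by omega)
  support := ⟨m + 1, fun _ hi => shapeOf_eq_zero (by omega)⟩
  basement _ := if_pos (Nat.zero_le _)
  pos i j h1 h2 := by
    rw [if_pos h2]
    by_contra hi
    rw [show i = 0 by omega, shapeOf_eq_zero (by omega)] at h2
    omega
  zero_outside _ _ h := if_neg (by omega)
  noDescent i j h := by rw [if_pos h, if_pos (by omega)]
  typeA i1 i2 j h12 hsh h1 h2 := by
    rw [if_pos (h2.trans hsh), if_pos h2, if_pos ((Nat.sub_le j 1).trans (h2.trans hsh))]
    simp only [ind]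
    split_ifs <;> omega
  typeB i1 i2 j h12 hsh h1 h2 := by
    rw [if_pos h2, if_pos (h1.trans hsh.le), if_pos h1]
    simp only [ind]
    split_ifs <;> omega

theorem NK_self (m : ℕ) (γ : Fin m → ℕ) : NK m γ γ = 1 := by
  have hcol : ∀ c ∈ (columnFilling m γ).cells, (columnFilling m γ).entry c.1 c.2 = c.1 :=
    fun c hc => if_pos hc.2
  refine Set.ncard_eq_one.2 ⟨columnFilling m γ, Set.eq_singleton_iff_unique_mem.2 ⟨?_, ?_⟩⟩
  · refine ⟨rfl, fun v => ?_⟩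
    rw [SSAF.count_eq_shape_of_entry_eq_column _ hcol]
    exact shapeOf_succ γ v
  · rintro F ⟨hshape, hcount⟩
    have hcount' : ∀ i, F.shape i ≠ 0 → F.count i = F.shape i := by
      intro i hi
      have hi' : 1 ≤ i ∧ i ≤ m := by
        by_contra h
        exact hi (by rw [hshape, shapeOf_eq_zero h])
      obtain ⟨v, rfl⟩ : ∃ v : Fin m, (v : ℕ) + 1 = i := ⟨⟨i - 1, by omega⟩, by simp; omega⟩
      rw [hcount, hshape, shapeOf_succ]
    have hcells : F.cells = (columnFilling m γ).cells := by
      simp only [SSAF.cells, hshape]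
      rfl
    refine SSAF.ext_of_cells hshape fun c hc => ?_
    rw [F.entry_eq_column_of_count_eq_shape hcount' c hc, hcol c (hcells ▸ hc)]

/-- `RevDom m μ γ` unfolds to `∀ k, tailSum m μ k ≤ tailSum m γ k`. -/
def tailSum (m : ℕ) (μ : Fin m → ℕ) (k : ℕ) : ℕ :=
  ∑ i ∈ Finset.univ.filter (fun i : Fin m => k ≤ (i : ℕ) + 1), μ i

theorem tailSum_succ {m : ℕ} (μ : Fin m → ℕ) (i : Fin m) :
    tailSum m μ (i + 1) = μ i + tailSum m μ (i + 2) := by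
  have : Finset.univ.filter (fun j : Fin m => (i : ℕ) + 1 ≤ j + 1) =
      insert i (Finset.univ.filter fun j : Fin m => (i : ℕ) + 2 ≤ j + 1) := by
    ext j
    simp only [Finset.mem_filter, Finset.mem_univ, true_and, Finset.mem_insert, Fin.ext_iff]
    omega
  rw [tailSum, this, Finset.sum_insert (by simp)]
  rfl

theorem ncard_sep_le_eq_tailSum {α : Type*} {m : ℕ} {S : Set α} (hS : S.Finite) {f : α → ℕ}
    (hf : ∀ x ∈ S, 1 ≤ f x ∧ f x ≤ m) (k : ℕ) :
    {x ∈ S | k ≤ f x}.ncard = tailSum m (fun i => {x ∈ S | f x = i + 1}.ncard) k := by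
  set T := Finset.univ.filter (fun i : Fin m => k ≤ (i : ℕ) + 1)
  have hmaps : Set.MapsTo f {x ∈ S | k ≤ f x} (T.image fun i : Fin m => (i : ℕ) + 1) := by
    rintro x ⟨hx, hkx⟩
    have := hf x hx
    refine Finset.mem_coe.2 (Finset.mem_image.2
      ⟨⟨f x - 1, by omega⟩, Finset.mem_filter.2 ⟨Finset.mem_univ _, ?_⟩, ?_⟩)
    · change k ≤ f x - 1 + 1
      omega
    · change f x - 1 + 1 = f x
      omega
  rw [Set.ncard_eq_sum_ncard_fiber (hS.subset (Set.sep_subset _ _)) hmaps,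
    Finset.sum_image fun i _ j _ h => Fin.ext (by simpa using h)]
  refine Finset.sum_congr rfl fun i hi => congrArg Set.ncard (Set.ext fun x => ?_)
  have hki : k ≤ (i : ℕ) + 1 := (Finset.mem_filter.1 hi).2
  simp only [Set.mem_ofPred_eq]
  constructor
  · rintro ⟨⟨hx, -⟩, hfx⟩
    exact ⟨hx, hfx⟩
  · rintro ⟨hx, hfx⟩
    exact ⟨⟨hx, hfx ▸ hki⟩, hfx⟩

theorem revDom_of_NK_ne_zero {m : ℕ} {γ μ : Fin m → ℕ} (h : NK m γ μ ≠ 0) : RevDom m μ γ := by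
  obtain ⟨F, hshape, hcount⟩ := Set.nonempty_of_ncard_ne_zero h
  have hcol : ∀ c ∈ F.cells, 1 ≤ c.1 ∧ c.1 ≤ m :=
    fun c hc => SSAF.column_mem_Icc_of_mem_cells hshape hc
  have hentry : ∀ c ∈ F.cells, 1 ≤ F.entry c.1 c.2 ∧ F.entry c.1 c.2 ≤ m := fun c hc =>
    ⟨F.pos c.1 c.2 hc.1 hc.2, (F.entry_le_of_le_shape hc.2).trans (hcol c hc).2⟩
  intro k
  change tailSum m μ k ≤ tailSum m γ k
  calc tailSum m μ k
      = {c ∈ F.cells | k ≤ F.entry c.1 c.2}.ncard := by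
        rw [ncard_sep_le_eq_tailSum F.cells_finite hentry]
        congr 1
        funext i
        rw [← hcount, SSAF.count_eq_ncard]
    _ ≤ {c ∈ F.cells | k ≤ c.1}.ncard :=
        Set.ncard_le_ncard (fun c ⟨hc, hk⟩ => ⟨hc, hk.trans (F.entry_le_of_le_shape hc.2)⟩)
          (F.cells_finite.subset (Set.sep_subset _ _))
    _ = tailSum m γ k := by
        rw [ncard_sep_le_eq_tailSum F.cells_finite hcol]
        simp only [SSAF.ncard_cells_column, hshape, shapeOf_succ]

def revDomWeight (m : ℕ) (μ : Fin m → ℕ) : ℕ :=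
  ∑ k ∈ Finset.range (m + 2), tailSum m μ k

theorem RevDom.weight_lt {m : ℕ} {μ γ : Fin m → ℕ} (h : RevDom m μ γ) (hne : μ ≠ γ) :
    revDomWeight m μ < revDomWeight m γ := by
  refine Finset.sum_lt_sum (fun k _ => h k) ?_
  by_contra! hge
  refine hne (funext fun i => ?_)
  have hμ := tailSum_succ μ i
  have hγ := tailSum_succ γ i
  have h1 := hge (i + 1) (Finset.mem_range.2 (by omega))
  have h2 := hge (i + 2) (Finset.mem_range.2 (by omega))
  have h3 : tailSum m μ (i + 1) ≤ tailSum m γ (i + 1) := h (i + 1)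
  have h4 : tailSum m μ (i + 2) ≤ tailSum m γ (i + 2) := h (i + 2)
  omega

/-- The transition matrix from the polynomials `Ê_γ(x;0,0)`, for `γ` a
weak composition of `n` into `m` parts, to the monomial basis is upper triangular with
respect to reverse dominance order with `1`'s on the diagonal (`NK γ μ ≠ 0 → μ ≤ γ`
and `NK γ γ = 1`); hence the `Ê_γ(x;0,0)` are linearly independent and span the same
subspace as the monomials of degree `n` in `m` variables. -/
theorem Ehat_basis (m n : ℕ) :
    (∀ γ μ : Fin m → ℕ, NK m γ μ ≠ 0 → RevDom m μ γ) ∧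
    (∀ γ : Fin m → ℕ, NK m γ γ = 1) ∧
    LinearIndependent ℚ
      (fun γ : Finset.Nat.antidiagonalTuple m n => Ehat m n (γ : Fin m → ℕ)) ∧
    Submodule.span ℚ
        (Set.range (fun γ : Finset.Nat.antidiagonalTuple m n => Ehat m n (γ : Fin m → ℕ))) =
      Submodule.span ℚ
        ((fun μ : Fin m → ℕ =>
            (MvPolynomial.monomial (Finsupp.equivFunOnFinite.symm μ) (1 : ℚ))) ''
          (Finset.Nat.antidiagonalTuple m n : Set (Fin m → ℕ))) := by
  set s := Finset.Nat.antidiagonalTuple m n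
  have hexpand : ∀ γ ∈ s, Ehat m n γ = ∑ μ ∈ s, (NK m γ μ : ℚ) •
      MvPolynomial.monomial (Finsupp.equivFunOnFinite.symm μ) (1 : ℚ) := fun _ _ => rfl
  have hdiag : ∀ γ ∈ s, (NK m γ γ : ℚ) = 1 := fun γ _ => by rw [NK_self, Nat.cast_one]
  have htri : ∀ γ ∈ s, ∀ μ ∈ s, (NK m γ μ : ℚ) ≠ 0 → μ ≠ γ →
      revDomWeight m μ < revDomWeight m γ :=
    fun _ _ _ _ h hne => (revDom_of_NK_ne_zero (Nat.cast_ne_zero.1 h)).weight_lt hne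
  have hmonomial : LinearIndependent ℚ fun μ : s =>
      MvPolynomial.monomial (Finsupp.equivFunOnFinite.symm (μ : Fin m → ℕ)) (1 : ℚ) :=
    (MvPolynomial.basisMonomials (Fin m) ℚ).linearIndependent.comp _
      (Finsupp.equivFunOnFinite.symm.injective.comp Subtype.val_injective)
  exact ⟨fun _ _ => revDom_of_NK_ne_zero, NK_self m,
    linearIndependent_of_unitriangular _ hexpand hdiag htri hmonomial,
    span_range_eq_of_unitriangular _ hexpand hdiag htri⟩
end
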